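/- arXiv:2506.03745 — 6 statements merged into one kernel-verified Lean document; each statement's English description precedes it below -/
import Mathlib

section
/- Let N be a finitely generated free abelian group and τ : N → N a ℤ-linear involution (τ ∘ τ = id). Then there exist natural numbers u, v, w and a ℤ-linear isomorphism φ : N ≅ ℤ^u ⊕ ℤ^v ⊕ (ℤ²)^w such that φ ∘ τ ∘ φ⁻¹ acts as the identity on the factor ℤ^u, as multiplication by −1 on the factor ℤ^v, and as the coordinate swap (a,b) ↦ (b,a) on each of the w factors ℤ². Equivalently, every ℤ[τ]-lattice is a direct sum of copies of the elementary ℤ[τ]-lattices ℤ[1], ℤ[−1] and ℤ[τ]. -/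
/-!
Induction on the rank. If `τ ≠ 1`, dividing a nonzero functional of the form `g ∘ τ - g` by
its content gives a functional `f` with `f ∘ τ = -f` and `f x = 1` for some `x`. Write
`x + τ x = d • a` with `h a = 1` for some functional `h`; then `a` is `τ`-fixed. If `d = 2t`,
then `b = x - t • a` satisfies `τ b = -b` and `f b = 1`, so `f` splits off `ℤ b ≅ ℤ[−1]`.
If `d = 2t + 1`, then `y = x - t • a` satisfies `y + τ y = a`, and a functional `g` with
`g y = g a = 1` (so `g (τ y) = 0`) makes `(g, g ∘ τ)` split off `ℤ y ⊕ ℤ τ y ≅ ℤ[τ]`. In both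
cases the complement is the kernel of the splitting map, a `τ`-stable lattice of smaller rank.
-/

open Module LinearMap Matrix Function

section Splitting

variable {R M N : Type*} [Ring R] [AddCommGroup M] [Module R M] [AddCommGroup N] [Module R N]

theorem exists_equiv_prod_ker_of_rightInverse (τ : N →ₗ[R] N) (σ : M →ₗ[R] M) (s : N →ₗ[R] M)
    (r : M →ₗ[R] N) (hsr : ∀ y, s (r y) = y) (hs : ∀ n, s (τ n) = σ (s n))
    (hr : ∀ y, τ (r y) = r (σ y)) :
    ∃ (e : N ≃ₗ[R] M × ker s) (τK : ker s →ₗ[R] ker s), (∀ k, (τK k : N) = τ k) ∧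
      ∀ n, e (τ n) = σ.prodMap τK (e n) := by
  let ρ : N →ₗ[R] ker s := (LinearMap.id - r ∘ₗ s).codRestrict (ker s) fun n => by simp [hsr]
  let e : N ≃ₗ[R] M × ker s :=
    { s.prod ρ with
      invFun p := r p.1 + p.2
      left_inv n := by simp [ρ]
      right_inv p := by
        have hp : s p.2 = 0 := p.2.2
        ext <;> simp [ρ, hsr, hp] }
  refine ⟨e, τ.restrict fun k (hk : s k = 0) => show s (τ k) = 0 by simp [hs, hk], fun _ => rfl,
    fun n => Prod.ext (hs n) (Subtype.ext ?_)⟩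
  change τ n - r (s (τ n)) = τ (n - r (s n))
  rw [map_sub, hr, hs]

end Splitting

section Lattice

variable {N : Type*} [AddCommGroup N] [Module.Free ℤ N] [Module.Finite ℤ N]

theorem exists_eq_smul_and_dual_apply_eq_one [Nontrivial N] (a : N) :
    ∃ (d : ℤ) (a₀ : N) (h : Dual ℤ N), a = d • a₀ ∧ h a₀ = 1 := by
  classical
  let b := (Free.chooseBasis ℤ N).equivFun
  have : Nonempty (Free.ChooseBasisIndex ℤ N) := (Free.chooseBasis ℤ N).index_nonempty
  obtain ⟨c, hc, hgcd⟩ := Finset.univ.extract_gcd (b a) Finset.univ_nonempty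
  obtain ⟨g, hg⟩ := Finset.univ.gcd_eq_sum_mul c
  refine ⟨Finset.univ.gcd (b a), b.symm c, (∑ i, g i • LinearMap.proj i) ∘ₗ b.toLinearMap, ?_, ?_⟩
  · apply b.injective
    ext i
    simp [hc i (Finset.mem_univ i)]
  · simp [← hgcd, hg, mul_comm]

theorem exists_dual_comp_eq_neg_and_apply_eq_one {τ : N →ₗ[ℤ] N} (hτ : Involutive τ)
    (hne : ∃ n, τ n ≠ n) : ∃ (f : Dual ℤ N) (x : N), (∀ n, f (τ n) = -f n) ∧ f x = 1 := by
  obtain ⟨n, hn⟩ := hne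
  obtain ⟨g, hg⟩ := Projective.exists_dual_ne_zero ℤ (sub_ne_zero.mpr hn)
  set F : Dual ℤ N := g ∘ₗ τ - g
  have hF : ∀ n, F (τ n) = -F n := fun n => by simp [F, hτ n]
  have hF0 : F ≠ 0 := by
    intro h
    have := LinearMap.congr_fun h (τ n - n)
    simp only [F, LinearMap.sub_apply, LinearMap.comp_apply, map_sub, hτ n,
      LinearMap.zero_apply] at this hg
    omega
  have : Nontrivial (Dual ℤ N) := nontrivial_of_ne F 0 hF0
  obtain ⟨d, f, H, hFd, hH⟩ := exists_eq_smul_and_dual_apply_eq_one F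
  have hd : d ≠ 0 := by rintro rfl; exact hF0 (by simpa using hFd)
  refine ⟨f, (evalEquiv ℤ N).symm H, fun m => mul_left_cancel₀ hd ?_, by simpa using hH⟩
  simpa [hFd] using hF m

theorem neg_or_swap_of_dual_apply_eq_one {τ : N →ₗ[ℤ] N} (hτ : Involutive τ)
    {f : Dual ℤ N} (hf : ∀ n, f (τ n) = -f n) {x : N} (hx : f x = 1) :
    (∃ b, τ b = -b ∧ f b = 1) ∨ ∃ (g : Dual ℤ N) (y : N), g y = 1 ∧ g (τ y) = 0 := by
  have : Nontrivial N := nontrivial_of_ne x 0 (by rintro rfl; simp at hx)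
  obtain ⟨d, a, h, hxa, ha⟩ := exists_eq_smul_and_dual_apply_eq_one (x + τ x)
  have hτx : τ x = d • a - x := by rw [← hxa]; abel
  have hτa : d • τ a = d • a := by rw [← map_smul, ← hxa, map_add, hτ x, add_comm]
  have hf_fixed : ∀ z, τ z = z → f z = 0 := fun z hz => by
    have := hf z
    rw [hz] at this
    omega
  rcases Int.even_or_odd' d with ⟨t, rfl | rfl⟩
  · have hτta : τ (t • a) = t • a := by
      apply smul_right_injective N (two_ne_zero (α := ℤ))
      simpa [smul_smul] using hτa
    refine Or.inl ⟨x - t • a, ?_, by simp [hx, hf_fixed _ hτta]⟩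
    rw [map_sub, hτta, hτx, mul_smul, two_smul]
    abel
  · have hτa : τ a = a := smul_right_injective N (by omega) hτa
    have hτy : τ (x - t • a) = a - (x - t • a) := by
      rw [map_sub, map_smul, hτa, hτx, add_smul, mul_smul, two_smul, one_smul]
      abel
    refine Or.inr ⟨h + (1 - h (x - t • a)) • f, x - t • a, ?_, ?_⟩
    · simp [hx, hf_fixed a hτa]
    · simp [hτy, ha, hx, hf_fixed a hτa]

end Lattice

def IsSumOfElementary {N : Type*} [AddCommGroup N] (τ : N →ₗ[ℤ] N) : Prop :=
  ∃ (u v w : ℕ) (φ : N ≃ₗ[ℤ] (Fin u → ℤ) × (Fin v → ℤ) × (Fin w → ℤ × ℤ)),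
    ∀ n, φ (τ n) = ((φ n).1, -(φ n).2.1, fun i => ((φ n).2.2 i).swap)

namespace IsSumOfElementary

variable {N M : Type*} [AddCommGroup N] [AddCommGroup M]

theorem of_linearEquiv {τ : N →ₗ[ℤ] N} {σ : M →ₗ[ℤ] M} (e : N ≃ₗ[ℤ] M)
    (he : ∀ n, e (τ n) = σ (e n)) (h : IsSumOfElementary σ) : IsSumOfElementary τ := by
  obtain ⟨u, v, w, φ, hφ⟩ := h
  exact ⟨u, v, w, e ≪≫ₗ φ, fun n => by simp [he, hφ]⟩

theorem of_forall_eq_self [Module.Free ℤ N] [Module.Finite ℤ N] {τ : N →ₗ[ℤ] N}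
    (hτ : ∀ n, τ n = n) : IsSumOfElementary τ :=
  ⟨_, 0, 0, (finBasis ℤ N).equivFun ≪≫ₗ LinearEquiv.ofBijective (inl ℤ _ _)
    ⟨inl_injective, fun p => ⟨p.1, Prod.ext rfl (Subsingleton.elim _ _)⟩⟩, fun n => by
    simp only [hτ]
    exact Prod.ext rfl (Subsingleton.elim _ _)⟩

variable (u v w : ℕ)

def consNeg : (ℤ × (Fin u → ℤ) × (Fin v → ℤ) × (Fin w → ℤ × ℤ)) ≃ₗ[ℤ]
    (Fin u → ℤ) × (Fin (v + 1) → ℤ) × (Fin w → ℤ × ℤ) where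
  toFun p := (p.2.1, vecCons p.1 p.2.2.1, p.2.2.2)
  invFun p := (p.2.1 0, p.1, vecTail p.2.1, p.2.2)
  map_add' p q := by simp
  map_smul' c p := by simp
  left_inv p := by simp
  right_inv p := Prod.ext rfl (Prod.ext (cons_head_tail _) rfl)

def consSwap : ((ℤ × ℤ) × (Fin u → ℤ) × (Fin v → ℤ) × (Fin w → ℤ × ℤ)) ≃ₗ[ℤ]
    (Fin u → ℤ) × (Fin v → ℤ) × (Fin (w + 1) → ℤ × ℤ) where
  toFun p := (p.2.1, p.2.2.1, vecCons p.1 p.2.2.2)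
  invFun p := (p.2.2 0, p.1, p.2.1, vecTail p.2.2)
  map_add' p q := by simp
  map_smul' c p := by simp
  left_inv p := by simp
  right_inv p := Prod.ext rfl (Prod.ext rfl (cons_head_tail _))

variable {u v w}

theorem neg_prodMap {τ : N →ₗ[ℤ] N} (h : IsSumOfElementary τ) :
    IsSumOfElementary ((-LinearMap.id : ℤ →ₗ[ℤ] ℤ).prodMap τ) := by
  obtain ⟨u, v, w, φ, hφ⟩ := h
  refine ⟨u, v + 1, w, (LinearEquiv.refl ℤ ℤ).prodCongr φ ≪≫ₗ consNeg u v w, ?_⟩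
  rintro ⟨k, n⟩
  simp [hφ, consNeg]

theorem swap_prodMap {τ : N →ₗ[ℤ] N} (h : IsSumOfElementary τ) :
    IsSumOfElementary ((LinearEquiv.prodComm ℤ ℤ ℤ).toLinearMap.prodMap τ) := by
  obtain ⟨u, v, w, φ, hφ⟩ := h
  refine ⟨u, v, w + 1, (LinearEquiv.refl ℤ (ℤ × ℤ)).prodCongr φ ≪≫ₗ consSwap u v w, ?_⟩
  rintro ⟨k, n⟩
  simp only [consSwap, prodMap_apply, LinearEquiv.coe_coe, LinearEquiv.prodComm_apply,
    LinearEquiv.trans_apply, LinearEquiv.prodCongr_apply, LinearEquiv.refl_apply, hφ,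
    LinearEquiv.coe_mk, coe_mk, AddHom.coe_mk, Prod.mk.injEq, true_and]
  funext i
  refine Fin.cases ?_ (fun _ => ?_) i <;> simp

theorem of_split [Module.Free ℤ N] [Module.Finite ℤ N] [Module.Free ℤ M] [Module.Finite ℤ M]
    [Nontrivial M] {τ : N →ₗ[ℤ] N} (hτ : Involutive τ) (σ : M →ₗ[ℤ] M) (s : N →ₗ[ℤ] M)
    (r : M →ₗ[ℤ] N) (hsr : ∀ y, s (r y) = y) (hs : ∀ n, s (τ n) = σ (s n))
    (hr : ∀ y, τ (r y) = r (σ y))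
    (hσ : ∀ τK : ker s →ₗ[ℤ] ker s, IsSumOfElementary τK →
      IsSumOfElementary (σ.prodMap τK))
    (ih : ∀ τK : ker s →ₗ[ℤ] ker s, Involutive τK → finrank ℤ (ker s) < finrank ℤ N →
      IsSumOfElementary τK) :
    IsSumOfElementary τ := by
  obtain ⟨e, τK, hτK, he⟩ := exists_equiv_prod_ker_of_rightInverse τ σ s r hsr hs hr
  have hrank : finrank ℤ N = finrank ℤ M + finrank ℤ (ker s) := by
    rw [e.finrank_eq, finrank_prod]
  have hinv : Involutive τK := fun k => Subtype.ext (by simp [hτK, hτ _])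
  exact (hσ τK (ih τK hinv (by have := finrank_pos (R := ℤ) (M := M); omega))).of_linearEquiv e he

theorem of_involutive [Module.Free ℤ N] [Module.Finite ℤ N] {τ : N →ₗ[ℤ] N}
    (hτ : Involutive τ) : IsSumOfElementary τ := by
  induction hr : finrank ℤ N using Nat.strong_induction_on generalizing N with
  | _ r ih =>
  have ih' (K : Submodule ℤ N) (τK : K →ₗ[ℤ] K) (hK : Involutive τK)
      (hlt : finrank ℤ K < finrank ℤ N) : IsSumOfElementary τK :=
    ih _ (hr ▸ hlt) hK rfl
  by_cases! hid : ∀ n, τ n = n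
  · exact of_forall_eq_self hid
  obtain ⟨f, x, hf, hx⟩ := exists_dual_comp_eq_neg_and_apply_eq_one hτ hid
  rcases neg_or_swap_of_dual_apply_eq_one hτ hf hx with ⟨b, hb, hfb⟩ | ⟨g, y, hgy, hgτy⟩
  · exact of_split hτ (-LinearMap.id) f (toSpanSingleton ℤ N b) (by simp [hfb]) hf
      (by simp [hb]) (fun _ => neg_prodMap) (ih' _)
  · exact of_split hτ (LinearEquiv.prodComm ℤ ℤ ℤ).toLinearMap (g.prod (g ∘ₗ τ))
      ((toSpanSingleton ℤ N y).coprod (toSpanSingleton ℤ N (τ y))) (by simp [hgy, hgτy, hτ y])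
      (by simp [hτ _]) (by simp [hτ y, add_comm]) (fun _ => swap_prodMap) (ih' _)

end IsSumOfElementary

/-- **Structure of ℤ[τ]-lattices.** Every finitely generated free abelian group with a
ℤ-linear involution decomposes as a direct sum of copies of the elementary
ℤ[τ]-lattices ℤ[1] (τ = id), ℤ[−1] (τ = −id) and ℤ[τ] (ℤ² with the coordinate swap). -/
theorem stmt_0 (N : Type*) [AddCommGroup N] [Module ℤ N]
    [Module.Free ℤ N] [Module.Finite ℤ N]
    (τ : N →ₗ[ℤ] N) (hτ : ∀ n, τ (τ n) = n) :
    ∃ (u v w : ℕ) (φ : N ≃ₗ[ℤ] (Fin u → ℤ) × (Fin v → ℤ) × (Fin w → ℤ × ℤ)),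
      ∀ n : N,
        φ (τ n) = ((φ n).1, -(φ n).2.1, fun i => ((φ n).2.2 i).swap) := by
  -- the lemmas use the `ℤ`-action of `AddCommGroup`, which is not defeq to an arbitrary one
  obtain rfl : ‹Module ℤ N› = AddCommGroup.toIntModule N := Subsingleton.elim _ _
  exact IsSumOfElementary.of_involutive hτ
end

section
/- Let (N, τ) be a ℤ[τ]-lattice and suppose that N is isomorphic, as a ℤ[τ]-lattice, to ℤ[1]^u ⊕ ℤ[−1]^v ⊕ ℤ[τ]^w. Then ker(1−τ) ∩ ker(1+τ) = 0, 2N ⊆ ker(1−τ) + ker(1+τ) (so that N/(ker(1−τ)+ker(1+τ)) is a finite F₂-vector space), and w = dim_{F₂} N/(ker(1−τ) + ker(1+τ)), u = rank ker(1−τ) − w, v = rank ker(1+τ) − w. In particular the triple (u, v, w) is uniquely determined by (N, τ). -/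
/-! The isomorphism `φ` conjugates `τ` to the standard involution `σ` of `ℤ^u × ℤ^v × (ℤ²)^w`, so
it carries both kernels and the quotient by their sum to those of `σ`. There `ker (1 - σ)` consists
of the vectors `(a, 0, (cᵢ, cᵢ))` and `ker (1 + σ)` of the vectors `(0, b, (cᵢ, -cᵢ))`, of ranks
`u + w` and `v + w`; their sum is the kernel of the surjection onto `(ℤ/2)^w` sending
`(a, b, (pᵢ, qᵢ))` to `(pᵢ + qᵢ mod 2)`, so the quotient has `2^w` elements. -/

open LinearMap Submodule

section Involution

variable {R M : Type*} [Ring R] [AddCommGroup M] [Module R M] (τ : Module.End R M)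

theorem mem_ker_one_sub_iff {x : M} : x ∈ ker (1 - τ) ↔ τ x = x := by
  rw [mem_ker, LinearMap.sub_apply, Module.End.one_apply, sub_eq_zero, eq_comm]

theorem mem_ker_one_add_iff {x : M} : x ∈ ker (1 + τ) ↔ τ x = -x := by
  rw [mem_ker, LinearMap.add_apply, Module.End.one_apply, add_comm, add_eq_zero_iff_eq_neg]

theorem ker_one_sub_inf_ker_one_add [IsAddTorsionFree M] : ker (1 - τ) ⊓ ker (1 + τ) = ⊥ := by
  refine eq_bot_iff.mpr fun x hx => ?_
  obtain ⟨hfix, hanti⟩ := mem_inf.mp hx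
  rw [mem_ker_one_sub_iff] at hfix
  rw [mem_ker_one_add_iff, hfix, eq_neg_iff_add_eq_zero, ← two_nsmul] at hanti
  exact (mem_bot R).mpr ((nsmul_eq_zero_iff_right two_ne_zero).mp hanti)

theorem two_zsmul_mem_ker_one_sub_sup_ker_one_add (hτ : ∀ x, τ (τ x) = x) (x : M) :
    (2 : ℤ) • x ∈ ker (1 - τ) ⊔ ker (1 + τ) := by
  refine mem_sup.mpr ⟨x + τ x, ?_, x - τ x, ?_, by rw [two_zsmul]; abel⟩
  · rw [mem_ker_one_sub_iff, map_add, hτ, add_comm]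
  · rw [mem_ker_one_add_iff, map_sub, hτ, neg_sub]

end Involution

theorem map_ker_of_comm {R M M' : Type*} [Ring R] [AddCommGroup M] [Module R M] [AddCommGroup M']
    [Module R M'] {f : Module.End R M} {g : Module.End R M'} (e : M ≃ₗ[R] M')
    (h : ∀ x, e (f x) = g (e x)) : (ker f).map (e : M →ₗ[R] M') = ker g := by
  ext y
  rw [mem_map_equiv, mem_ker, mem_ker, ← e.map_eq_zero_iff, h, e.apply_symm_apply]

/-- `Module.finrank ℤ p` elaborates with the instance `AddCommGroup.toIntModule` on `p` instead of
`p.module`, so `LinearEquiv.finrank_map_eq` does not apply to it verbatim. -/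
theorem LinearEquiv.finrank_map_eq_int {M M' : Type*} [AddCommGroup M] [Module ℤ M]
    [AddCommGroup M'] [Module ℤ M'] (e : M ≃ₗ[ℤ] M') (p : Submodule ℤ M) :
    Module.finrank ℤ (p.map (e : M →ₗ[ℤ] M')) = Module.finrank ℤ p := by
  convert e.finrank_map_eq p <;> exact Subsingleton.elim _ _

namespace ZTauLattice

variable (u v w : ℕ)

abbrev Standard : Type := (Fin u → ℤ) × (Fin v → ℤ) × (Fin w → ℤ × ℤ)

@[simps]
def standardInvolution : Module.End ℤ (Standard u v w) where
  toFun x := (x.1, -x.2.1, fun i => (x.2.2 i).swap)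
  map_add' x y := by ext <;> simp [add_comm]
  map_smul' c x := by ext <;> simp

@[simps]
def fixedEmbedding : ((Fin u → ℤ) × (Fin w → ℤ)) →ₗ[ℤ] Standard u v w where
  toFun a := (a.1, 0, fun i => (a.2 i, a.2 i))
  map_add' a b := by ext <;> simp
  map_smul' c a := by ext <;> simp

@[simps]
def antiEmbedding : ((Fin v → ℤ) × (Fin w → ℤ)) →ₗ[ℤ] Standard u v w where
  toFun a := (0, a.1, fun i => (a.2 i, -a.2 i))
  map_add' a b := by ext <;> simp [add_comm]
  map_smul' c a := by ext <;> simp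

theorem fixedEmbedding_injective : Function.Injective (fixedEmbedding u v w) := by
  intro a b h
  simp only [fixedEmbedding_apply, Prod.mk.injEq, funext_iff] at h
  exact Prod.ext (funext h.1) (funext fun i => (h.2.2 i).1)

theorem antiEmbedding_injective : Function.Injective (antiEmbedding u v w) := by
  intro a b h
  simp only [antiEmbedding_apply, Prod.mk.injEq, funext_iff] at h
  exact Prod.ext (funext h.2.1) (funext fun i => (h.2.2 i).1)

theorem ker_one_sub_standardInvolution :
    ker (1 - standardInvolution u v w) = range (fixedEmbedding u v w) := by
  ext x
  rw [mem_ker_one_sub_iff, mem_range]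
  constructor
  · intro h
    simp only [standardInvolution_apply, Prod.ext_iff, funext_iff, Pi.neg_apply, Prod.fst_swap,
      Prod.snd_swap] at h
    refine ⟨(x.1, fun i => (x.2.2 i).1), Prod.ext rfl (Prod.ext ?_ ?_)⟩
    · ext j; have := h.2.1 j; simp at this ⊢; omega
    · ext i <;> simp [(h.2.2 i).1]
  · rintro ⟨a, rfl⟩
    ext <;> simp

theorem ker_one_add_standardInvolution :
    ker (1 + standardInvolution u v w) = range (antiEmbedding u v w) := by
  ext x
  rw [mem_ker_one_add_iff, mem_range]
  constructor
  · intro h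
    simp only [standardInvolution_apply, Prod.ext_iff, funext_iff, Pi.neg_apply, Prod.fst_swap,
      Prod.snd_swap, Prod.fst_neg, Prod.snd_neg] at h
    refine ⟨(x.2.1, fun i => (x.2.2 i).1), Prod.ext ?_ (Prod.ext rfl ?_)⟩
    · ext j; have := h.1 j; simp; omega
    · ext i <;> simp [(h.2.2 i).1]
  · rintro ⟨a, rfl⟩
    ext <;> simp

@[simps]
def parity : Standard u v w →ₗ[ℤ] Fin w → ZMod 2 where
  toFun x i := ((x.2.2 i).1 + (x.2.2 i).2 : ℤ)
  map_add' x y := by ext; simp; ring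
  map_smul' c x := by ext; simp

theorem parity_surjective : Function.Surjective (parity u v w) :=
  fun e => ⟨(0, 0, fun i => ((e i).val, 0)), by ext; simp⟩

theorem ker_parity : ker (parity u v w) =
    ker (1 - standardInvolution u v w) ⊔ ker (1 + standardInvolution u v w) := by
  refine le_antisymm (fun x hx => ?_) (sup_le (fun x hx => ?_) (fun x hx => ?_))
  · have hdvd : ∀ i, (2 : ℤ) ∣ (x.2.2 i).1 + (x.2.2 i).2 := fun i =>
      (ZMod.intCast_zmod_eq_zero_iff_dvd _ 2).mp (congrFun (mem_ker.mp hx) i)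
    choose m hm using hdvd
    refine mem_sup.mpr ⟨fixedEmbedding u v w (x.1, m), ?_, antiEmbedding u v w (x.2.1,
      fun i => (x.2.2 i).1 - m i), ?_, ?_⟩
    · exact ker_one_sub_standardInvolution u v w ▸ mem_range_self _ _
    · exact ker_one_add_standardInvolution u v w ▸ mem_range_self _ _
    · ext i <;> simp
      linarith [hm i]
  · rw [ker_one_sub_standardInvolution] at hx
    obtain ⟨a, rfl⟩ := hx
    ext i
    simp [← two_mul, show (2 : ZMod 2) = 0 from rfl]
  · rw [ker_one_add_standardInvolution] at hx
    obtain ⟨a, rfl⟩ := hx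
    ext i
    simp

theorem card_quotient_standard : Nat.card (Standard u v w ⧸
    (ker (1 - standardInvolution u v w) ⊔ ker (1 + standardInvolution u v w))) = 2 ^ w := by
  rw [← ker_parity, Nat.card_congr ((parity u v w).quotKerEquivOfSurjective
    (parity_surjective u v w)).toEquiv]
  simp

theorem finrank_ker_one_sub_standardInvolution :
    Module.finrank ℤ (ker (1 - standardInvolution u v w)) = u + w := by
  rw [ker_one_sub_standardInvolution]
  convert finrank_range_of_inj (fixedEmbedding_injective u v w)
  simp

theorem finrank_ker_one_add_standardInvolution :
    Module.finrank ℤ (ker (1 + standardInvolution u v w)) = v + w := by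
  rw [ker_one_add_standardInvolution]
  convert finrank_range_of_inj (antiEmbedding_injective u v w)
  simp

end ZTauLattice

open ZTauLattice in
theorem stmt_1_general (N : Type*) [AddCommGroup N] [Module ℤ N]
    (τ : N →ₗ[ℤ] N) (hτ : ∀ n, τ (τ n) = n)
    (u v w : ℕ) (φ : N ≃ₗ[ℤ] (Fin u → ℤ) × (Fin v → ℤ) × (Fin w → ℤ × ℤ))
    (hφ : ∀ n : N, φ (τ n) = ((φ n).1, -(φ n).2.1, fun i => ((φ n).2.2 i).swap)) :
    LinearMap.ker (1 - τ : Module.End ℤ N) ⊓ LinearMap.ker (1 + τ : Module.End ℤ N) = ⊥ ∧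
    (∀ n : N, (2 : ℤ) • n ∈
      LinearMap.ker (1 - τ : Module.End ℤ N) ⊔ LinearMap.ker (1 + τ : Module.End ℤ N)) ∧
    Nat.card (N ⧸ (LinearMap.ker (1 - τ : Module.End ℤ N) ⊔
      LinearMap.ker (1 + τ : Module.End ℤ N))) = 2 ^ w ∧
    Module.finrank ℤ (LinearMap.ker (1 - τ : Module.End ℤ N)) = u + w ∧
    Module.finrank ℤ (LinearMap.ker (1 + τ : Module.End ℤ N)) = v + w := by
  have hconj : ∀ n, φ (τ n) = standardInvolution u v w (φ n) := hφ
  have : IsAddTorsionFree N := φ.injective.isAddTorsionFree φ.toAddMonoidHom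
  have hfix : (ker (1 - τ)).map (φ : N →ₗ[ℤ] _) = ker (1 - standardInvolution u v w) :=
    map_ker_of_comm φ fun n => by simp [hconj]
  have hanti : (ker (1 + τ)).map (φ : N →ₗ[ℤ] _) = ker (1 + standardInvolution u v w) :=
    map_ker_of_comm φ fun n => by simp [hconj]
  refine ⟨ker_one_sub_inf_ker_one_add τ, two_zsmul_mem_ker_one_sub_sup_ker_one_add τ hτ, ?_, ?_, ?_⟩
  · rw [← card_quotient_standard u v w]
    exact Nat.card_congr (Quotient.equiv _ _ φ (by rw [Submodule.map_sup, hfix, hanti])).toEquiv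
  · rw [← finrank_ker_one_sub_standardInvolution u v w, ← hfix]
    exact (φ.finrank_map_eq_int _).symm
  · rw [← finrank_ker_one_add_standardInvolution u v w, ← hanti]
    exact (φ.finrank_map_eq_int _).symm

/-- **Uniqueness of the type of a ℤ[τ]-lattice.** If `(N, τ)` is isomorphic, as a
ℤ[τ]-lattice, to `ℤ[1]^u ⊕ ℤ[−1]^v ⊕ ℤ[τ]^w`, then `ker(1−τ) ∩ ker(1+τ) = 0`,
`2N ⊆ ker(1−τ) + ker(1+τ)`, the quotient `N/(ker(1−τ)+ker(1+τ))` has cardinality `2^w`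
(so `w = dim_{F₂}` of the quotient), and `rank ker(1−τ) = u + w`, `rank ker(1+τ) = v + w`;
in particular `(u, v, w)` is uniquely determined by `(N, τ)`. -/
theorem stmt_1 (N : Type*) [AddCommGroup N] [Module ℤ N]
    [Module.Free ℤ N] [Module.Finite ℤ N]
    (τ : N →ₗ[ℤ] N) (hτ : ∀ n, τ (τ n) = n)
    (u v w : ℕ) (φ : N ≃ₗ[ℤ] (Fin u → ℤ) × (Fin v → ℤ) × (Fin w → ℤ × ℤ))
    (hφ : ∀ n : N, φ (τ n) = ((φ n).1, -(φ n).2.1, fun i => ((φ n).2.2 i).swap)) :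
    LinearMap.ker (1 - τ : Module.End ℤ N) ⊓ LinearMap.ker (1 + τ : Module.End ℤ N) = ⊥ ∧
    (∀ n : N, (2 : ℤ) • n ∈
      LinearMap.ker (1 - τ : Module.End ℤ N) ⊔ LinearMap.ker (1 + τ : Module.End ℤ N)) ∧
    Nat.card (N ⧸ (LinearMap.ker (1 - τ : Module.End ℤ N) ⊔
      LinearMap.ker (1 + τ : Module.End ℤ N))) = 2 ^ w ∧
    Module.finrank ℤ (LinearMap.ker (1 - τ : Module.End ℤ N)) = u + w ∧
    Module.finrank ℤ (LinearMap.ker (1 + τ : Module.End ℤ N)) = v + w :=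
  stmt_1_general N τ hτ u v w φ hφ
end

section
/- Let A be an n×n integer matrix with A² = I, and let σ_A be the induced involution of (ℂˣ)^n. Set p = rank ker(I−A) (kernel taken in ℤ^n), q = rank ker(I+A), and r = dim_{F₂} ℤ^n/(ker(I−A) + ker(I+A)). Then the fixed subgroup {z ∈ (ℂˣ)^n : σ_A(z) = z} is isomorphic, as a topological group, to (ℝˣ)^{p−r} × (S¹)^{q−r} × (ℂˣ)^r, where S¹ = {z ∈ ℂ : |z| = 1}. -/
/-- The monoid homomorphism `(ℂˣ)^m → (ℂˣ)^n` attached to an integer matrix `B`,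
`z ↦ (∏ i, z i ^ B j i)_j`. -/
noncomputable def matZPow {m n : ℕ} (B : Matrix (Fin n) (Fin m) ℤ) :
    (Fin m → ℂˣ) →* (Fin n → ℂˣ) where
  toFun z j := ∏ i, z i ^ B j i
  map_one' := by funext j; simp
  map_mul' x y := by
    funext j
    simp [mul_zpow, Finset.prod_mul_distrib]

/-- The involution `σ_A` of `(ℂˣ)^n` attached to an integer matrix `A` with `A² = I`:
`σ_A(z)_j = ∏ i, conj (z i) ^ A j i`. -/
noncomputable def sigmaMat {n : ℕ} (A : Matrix (Fin n) (Fin n) ℤ) :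
    (Fin n → ℂˣ) →* (Fin n → ℂˣ) :=
  (matZPow A).comp (MonoidHom.compLeft (Units.map (starRingEnd ℂ).toMonoidHom) (Fin n))

/-- The subgroup of fixed points of an endomorphism of a group. -/
def fixedSubgroup {G : Type*} [Group G] (σ : G →* G) : Subgroup G where
  carrier := {z | σ z = z}
  one_mem' := map_one σ
  mul_mem' := by
    intro a b ha hb
    simp only [Set.mem_setOf_eq, map_mul] at *
    rw [ha, hb]
  inv_mem' := by
    intro a ha
    simp only [Set.mem_setOf_eq, map_inv] at *
    rw [ha]

/-!
Over `ℤ` (more generally over a PID with `2 ≠ 0` in which every element is `≡ 0` or `1 mod 2`),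
a lattice with an involution `f` has a basis on which `f` acts by `1` (`a` times), by `-1`
(`b` times) and by swapping `c` pairs. The proof is by induction on the rank. If `ker (1 - f) ⊕ ker (1 + f)` is
everything, bases of the two summands will do. Otherwise an element `x` outside it can be corrected
by multiples of eigenvectors to some `y` with both `y + f y` and `y - f y` unimodular; this yields a
functional `β` with `β y = 1` and `β (f y) = 0`, so `span {y, f y}` splits off with the `f`-stable
complement `ker β ⊓ ker (β ∘ f)`.

Applied to `x ↦ A x` on `ℤⁿ`, this conjugates `A` in `GL_n(ℤ)` to a block matrix `D`, which
transports both the fixed subgroup of `σ_A` and the three invariants. For `D` the invariants are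
`p = a + c`, `q = b + c`, `r = c`, and the fixed subgroup of `σ_D` is visibly
`(ℝˣ)^a × (S¹)^b × (ℂˣ)^c`.
-/

open Module ComplexConjugate
open scoped Matrix

lemma Finset.prod_zpow_eq_zpow_sum {G α : Type*} [CommGroup G] (s : Finset α) (e : α → ℤ)
    (g : G) : ∏ i ∈ s, g ^ e i = g ^ ∑ i ∈ s, e i := by
  induction s using Finset.cons_induction <;> simp [*, zpow_add]

lemma Matrix.mul_eq_mul_of_mul_eq_mul {ι κ R : Type*} [Fintype ι] [Fintype κ] [DecidableEq ι]
    [DecidableEq κ] [Semiring R] {E : Matrix ι κ R} {E' : Matrix κ ι R} {A : Matrix ι ι R}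
    {D : Matrix κ κ R} (hEE' : E * E' = 1) (hE'E : E' * E = 1) (hAE : A * E = E * D) :
    E' * A = D * E' :=
  calc E' * A = E' * (A * E) * E' := by
        rw [Matrix.mul_assoc, Matrix.mul_assoc, hEE', Matrix.mul_one]
    _ = D * E' := by rw [hAE, ← Matrix.mul_assoc, hE'E, Matrix.one_mul]

/-- Index set of the normal form: `Fin a` and `Fin b` index the eigenvalues `1` and `-1`, and the
two copies of `Fin c` the pairs of basis vectors swapped by the involution. -/
abbrev BlockIdx (a b c : ℕ) := (Fin a ⊕ Fin b) ⊕ (Fin c ⊕ Fin c)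

namespace BlockIdx

variable {a b c : ℕ}

def swap : BlockIdx a b c → BlockIdx a b c := Sum.map id Sum.swap

def sign : BlockIdx a b c → ℤ := Sum.elim (Sum.elim (fun _ => 1) (fun _ => -1)) (fun _ => 1)

@[simp] lemma swap_inl (i : Fin a ⊕ Fin b) : swap (.inl i : BlockIdx a b c) = .inl i := rfl
@[simp] lemma swap_inr_inl (i : Fin c) : swap (.inr (.inl i) : BlockIdx a b c) = .inr (.inr i) :=
  rfl
@[simp] lemma swap_inr_inr (i : Fin c) : swap (.inr (.inr i) : BlockIdx a b c) = .inr (.inl i) :=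
  rfl
@[simp] lemma swap_swap (j : BlockIdx a b c) : swap (swap j) = j := by
  rcases j with (j | j) | (j | j) <;> rfl
@[simp] lemma sign_inl_inl (i : Fin a) : sign (.inl (.inl i) : BlockIdx a b c) = 1 := rfl
@[simp] lemma sign_inl_inr (i : Fin b) : sign (.inl (.inr i) : BlockIdx a b c) = -1 := rfl
@[simp] lemma sign_inr (i : Fin c ⊕ Fin c) : sign (.inr i : BlockIdx a b c) = 1 := rfl
@[simp] lemma sign_swap (j : BlockIdx a b c) : sign (swap j) = sign j := by
  rcases j with (j | j) | (j | j) <;> rfl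

def succEquiv (a b c : ℕ) : (Bool ⊕ BlockIdx a b c) ≃ BlockIdx a b (c + 1) where
  toFun
    | .inl false => .inr (.inl (Fin.last c))
    | .inl true => .inr (.inr (Fin.last c))
    | .inr (.inl s) => .inl s
    | .inr (.inr (.inl i)) => .inr (.inl i.castSucc)
    | .inr (.inr (.inr i)) => .inr (.inr i.castSucc)
  invFun
    | .inl s => .inr (.inl s)
    | .inr (.inl i) =>
        if h : i = Fin.last c then .inl false else .inr (.inr (.inl (i.castPred h)))
    | .inr (.inr i) =>
        if h : i = Fin.last c then .inl true else .inr (.inr (.inr (i.castPred h)))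
  left_inv := by
    rintro ((_ | _) | (s | (i | i))) <;> simp [(Fin.castSucc_lt_last _).ne]
  right_inv := by
    rintro (s | (i | i))
    · rfl
    all_goals
      by_cases h : i = Fin.last c
      · subst h; simp
      · simp [h]

lemma swap_succEquiv (j : Bool ⊕ BlockIdx a b c) :
    swap (succEquiv a b c j) = succEquiv a b c (Sum.map not swap j) := by
  rcases j with (_ | _) | ((s | s) | (i | i)) <;> rfl

lemma sign_succEquiv (j : Bool ⊕ BlockIdx a b c) :
    sign (succEquiv a b c j) = Sum.elim (fun _ => 1) sign j := by
  rcases j with (_ | _) | ((s | s) | (i | i)) <;> rfl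

end BlockIdx

open BlockIdx

section Involution

variable {R N : Type*} [CommRing R] [AddCommGroup N] [Module R N] {f : N →ₗ[R] N}

lemma exists_dual_apply_eq_one_apply_eq_zero (hf : Function.Involutive f) {y : N}
    {β₁ β₂ : Dual R N} (h₁ : β₁ (y + f y) = 1) (h₂ : β₂ (y - f y) = 1) :
    ∃ β : Dual R N, β y = 1 ∧ β (f y) = 0 := by
  simp only [map_add, map_sub] at h₁ h₂
  refine ⟨β₁ - (β₁ y - 1) • (β₂ - β₂ ∘ₗ f), ?_, ?_⟩ <;>
    simp only [LinearMap.sub_apply, LinearMap.smul_apply, LinearMap.comp_apply, hf y, smul_eq_mul]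
  · linear_combination -(β₁ y - 1) * h₂
  · linear_combination h₁ + (β₁ y - 1) * h₂

variable {β : Dual R N} {y : N}

lemma apply_mem_ker_inf_ker_comp (hf : Function.Involutive f) {k : N}
    (hk : k ∈ LinearMap.ker β ⊓ LinearMap.ker (β ∘ₗ f)) :
    f k ∈ LinearMap.ker β ⊓ LinearMap.ker (β ∘ₗ f) := by
  simp only [Submodule.mem_inf, LinearMap.mem_ker, LinearMap.comp_apply, hf k] at hk ⊢
  exact hk.symm

def regularSplitting (hf : Function.Involutive f) (hy : β y = 1) (hfy : β (f y) = 0) :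
    N ≃ₗ[R] (Bool → R) × ↥(LinearMap.ker β ⊓ LinearMap.ker (β ∘ₗ f)) where
  toFun x := (fun i => cond i (β (f x)) (β x), ⟨x - β x • y - β (f x) • f y, by
    simp [hf y, hy, hfy]⟩)
  invFun p := p.1 false • y + p.1 true • f y + p.2
  map_add' x x' := by
    ext i
    · cases i <;> simp
    · simp only [map_add, add_smul, Prod.snd_add, Submodule.coe_add]; abel
  map_smul' r x := by
    ext i
    · cases i <;> simp
    · simp only [map_smul, smul_eq_mul, mul_smul, RingHom.id_apply, Prod.smul_snd,
        Submodule.coe_smul, smul_sub]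
  left_inv x := by simp
  right_inv := by
    rintro ⟨c, k, hk⟩
    simp only [Submodule.mem_inf, LinearMap.mem_ker, LinearMap.comp_apply] at hk
    ext i
    · cases i <;> simp [hf y, hy, hfy, hk.1, hk.2]
    · simp [hf y, hy, hfy, hk.1, hk.2]
      abel

lemma exists_basis_succ (hf : Function.Involutive f) (hy : β y = 1) (hfy : β (f y) = 0)
    {a b c : ℕ} (v : Basis (BlockIdx a b c) R ↥(LinearMap.ker β ⊓ LinearMap.ker (β ∘ₗ f)))
    (hv : ∀ j, f (v j) = sign j • (v (swap j) : N)) :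
    ∃ w : Basis (BlockIdx a b (c + 1)) R N, ∀ j, f (w j) = sign j • w (swap j) := by
  classical
  let w := (((Pi.basisFun R Bool).prod v).map (regularSplitting hf hy hfy).symm).reindex
    (succEquiv a b c)
  have hw j :
      w (succEquiv a b c j) = Sum.elim (fun i => cond i (f y) y) (fun j => (v j : N)) j := by
    rcases j with (_ | _) | j <;> simp [w, regularSplitting]
  refine ⟨w, fun k => ?_⟩
  obtain ⟨j, rfl⟩ := (succEquiv a b c).surjective k
  rw [swap_succEquiv, sign_succEquiv, hw, hw]
  rcases j with (_ | _) | j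
  · simp
  · simp [hf y]
  · simpa using hv j

variable [IsDomain R] [IsPrincipalIdealRing R] [Free R N] [Module.Finite R N]

lemma exists_eq_smul_dual_apply_eq_one {u : N} (hu : u ≠ 0) :
    ∃ (d : R) (u₀ : N) (β : Dual R N), u = d • u₀ ∧ β u₀ = 1 := by
  classical
  set b := Free.chooseBasis R N
  set I : Ideal R := LinearMap.range (Dual.eval R N u)
  set d := Submodule.IsPrincipal.generator I
  obtain ⟨β, hβ⟩ : ∃ β : Dual R N, β u = d := Submodule.IsPrincipal.generator_mem I
  -- the coordinates of `u` are values `β u`, hence multiples of `d`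
  choose c hc using fun i => (Submodule.IsPrincipal.mem_iff_generator_dvd I).1 ⟨b.coord i, rfl⟩
  have hu₀ : u = d • b.equivFun.symm c := b.equivFun.injective <| by
    rw [map_smul, LinearEquiv.apply_symm_apply]; ext i; simpa using hc i
  refine ⟨d, _, β, hu₀, ?_⟩
  have hd : d ≠ 0 := by rintro hd; exact hu (by rw [hu₀, hd, zero_smul])
  apply mul_left_cancel₀ hd
  rw [mul_one, ← smul_eq_mul, ← map_smul, ← hu₀, hβ]

lemma exists_basis_of_sup_eq_top (h2 : (2 : R) ≠ 0)
    (htop : LinearMap.ker (LinearMap.id - f) ⊔ LinearMap.ker (LinearMap.id + f) = ⊤) :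
    ∃ (a b : ℕ) (v : Basis (BlockIdx a b 0) R N), ∀ j, f (v j) = sign j • v (swap j) := by
  set P := LinearMap.ker (LinearMap.id - f)
  set M := LinearMap.ker (LinearMap.id + f)
  have hP : ∀ x ∈ P, f x = x := fun x hx => (sub_eq_zero.1 (LinearMap.mem_ker.1 hx)).symm
  have hM : ∀ x ∈ M, f x = -x := fun x hx => eq_neg_of_add_eq_zero_right (LinearMap.mem_ker.1 hx)
  have hPM : IsCompl P M := by
    refine ⟨Submodule.disjoint_def.2 fun x hxP hxM => ?_, codisjoint_iff.2 htop⟩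
    have : (2 : R) • x = 0 := by
      rw [two_smul]; nth_rw 2 [← hP x hxP]; rw [hM x hxM, add_neg_cancel]
    exact (smul_eq_zero.1 this).resolve_left h2
  let v := (((finBasis R P).prod (finBasis R M)).map (Submodule.prodEquivOfIsCompl P M hPM)).reindex
    (Equiv.sumEmpty _ (Fin 0 ⊕ Fin 0)).symm
  refine ⟨_, _, v, ?_⟩
  rintro ((i | i) | (i | i))
  · simpa [v] using hP _ (finBasis R P i).2
  · simpa [v] using hM _ (finBasis R M i).2
  all_goals exact i.elim0

variable (hR : ∀ r : R, ∃ s, r = 2 * s ∨ r = 2 * s + 1)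
include hR

lemma exists_fixed_dual_apply_sub_smul_add_eq_one (hf : Function.Involutive f) {x : N}
    (hx : x ∉ LinearMap.ker (LinearMap.id - f) ⊔ LinearMap.ker (LinearMap.id + f)) :
    ∃ a, f a = a ∧ ∃ (m : R) (β : Dual R N), β ((x - m • a) + f (x - m • a)) = 1 := by
  have hu : x + f x ≠ 0 := fun h =>
    hx (Submodule.mem_sup_right (by simpa [add_comm] using h))
  obtain ⟨d, a, β, hda, hβ⟩ := exists_eq_smul_dual_apply_eq_one (R := R) hu
  have hd : d ≠ 0 := by rintro rfl; exact hu (by rw [hda, zero_smul])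
  have ha : f a = a := by
    have : d • (f a - a) = 0 := by
      rw [smul_sub, ← map_smul, ← hda, map_add, hf x]; abel
    exact sub_eq_zero.1 ((smul_eq_zero.1 this).resolve_left hd)
  have key s : (x - s • a) + f (x - s • a) = (d - 2 * s) • a := by
    rw [map_sub, map_smul, ha, sub_smul, ← hda, mul_smul, two_smul]; abel
  obtain ⟨s, rfl | rfl⟩ := hR d
  · refine absurd (Submodule.mem_sup.2 ⟨s • a, ?_, x - s • a, ?_, add_sub_cancel _ _⟩) hx
    · simp [ha]
    · simpa using key s
  · exact ⟨a, ha, s, β, by rw [key, add_sub_cancel_left, one_smul, hβ]⟩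

lemma exists_dual_apply_eq_one_apply_eq_zero_of_notMem_sup (hf : Function.Involutive f)
    {x : N} (hx : x ∉ LinearMap.ker (LinearMap.id - f) ⊔ LinearMap.ker (LinearMap.id + f)) :
    ∃ (y : N) (β : Dual R N), β y = 1 ∧ β (f y) = 0 := by
  obtain ⟨a, ha, m, β₁, h₁⟩ := exists_fixed_dual_apply_sub_smul_add_eq_one hR hf hx
  -- correcting further by a `(-1)`-eigenvector makes `y - f y` unimodular and keeps `y + f y`
  have hx' : x - m • a ∉
      LinearMap.ker (LinearMap.id - -f) ⊔ LinearMap.ker (LinearMap.id + -f) := by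
    rw [sub_neg_eq_add, ← sub_eq_add_neg, sup_comm]
    intro h
    have hma : m • a ∈ LinearMap.ker (LinearMap.id - f) := by simp [ha]
    simpa using hx (by simpa using Submodule.add_mem _ h (Submodule.mem_sup_left hma))
  have hf' : Function.Involutive (-f) := fun z => by simp [hf z]
  obtain ⟨b, hb, k, β₂, h₂⟩ := exists_fixed_dual_apply_sub_smul_add_eq_one hR hf' hx'
  refine ⟨_, exists_dual_apply_eq_one_apply_eq_zero hf (y := x - m • a - k • b)
    (β₁ := β₁) (β₂ := β₂) ?_ ?_⟩
  · convert h₁ using 2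
    rw [LinearMap.neg_apply, neg_eq_iff_eq_neg] at hb
    rw [map_sub f (x - m • a) (k • b), map_smul, hb, smul_neg]; abel
  · simpa [sub_eq_add_neg] using h₂

theorem exists_basis_involution (h2 : (2 : R) ≠ 0) (hf : Function.Involutive f) :
    ∃ (a b c : ℕ) (v : Basis (BlockIdx a b c) R N), ∀ j, f (v j) = sign j • v (swap j) := by
  induction hn : finrank R N using Nat.strong_induction_on generalizing N with
  | _ n ih =>
  by_cases htop : LinearMap.ker (LinearMap.id - f) ⊔ LinearMap.ker (LinearMap.id + f) = ⊤
  · obtain ⟨a, b, v, hv⟩ := exists_basis_of_sup_eq_top h2 htop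
    exact ⟨a, b, 0, v, hv⟩
  obtain ⟨x, hx⟩ := not_forall.1 (mt Submodule.eq_top_iff'.2 htop)
  obtain ⟨y, β, hy, hfy⟩ := exists_dual_apply_eq_one_apply_eq_zero_of_notMem_sup hR hf hx
  have hK : finrank R ↥(LinearMap.ker β ⊓ LinearMap.ker (β ∘ₗ f)) < n := by
    have := (regularSplitting hf hy hfy).finrank_eq
    rw [finrank_prod, finrank_pi, Fintype.card_bool] at this
    omega
  obtain ⟨a, b, c, v, hv⟩ := ih _ hK (f := f.restrict fun k => apply_mem_ker_inf_ker_comp hf)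
    (fun k => Subtype.ext (hf k)) rfl
  obtain ⟨w, hw⟩ := exists_basis_succ hf hy hfy v fun j => congrArg Subtype.val (hv j)
  exact ⟨a, b, c + 1, w, hw⟩

end Involution

section BlockMatrix

variable {a b c : ℕ}

def blockMatrix (a b c : ℕ) : Matrix (BlockIdx a b c) (BlockIdx a b c) ℤ :=
  Matrix.of fun j k => if k = swap j then sign j else 0

lemma blockMatrix_mulVec (v : BlockIdx a b c → ℤ) (j : BlockIdx a b c) :
    (blockMatrix a b c *ᵥ v) j = sign j * v (swap j) := by
  simp [blockMatrix, Matrix.mulVec, dotProduct]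

lemma mul_blockMatrix_apply {ι : Type*} (M : Matrix ι (BlockIdx a b c) ℤ) (i : ι)
    (j : BlockIdx a b c) : (M * blockMatrix a b c) i j = sign j * M i (swap j) := by
  rw [Matrix.mul_apply, Finset.sum_eq_single (swap j)]
  · simp [blockMatrix, mul_comm]
  · intro k _ hk
    simp [blockMatrix, show j ≠ swap k from fun h => hk (by rw [h, swap_swap])]
  · simp

lemma mem_ker_one_sub_blockMatrix {v : BlockIdx a b c → ℤ} :
    v ∈ LinearMap.ker (1 - blockMatrix a b c).mulVecLin ↔ ∀ j, v j = sign j * v (swap j) := by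
  simp [funext_iff, blockMatrix_mulVec, sub_eq_zero]

lemma mem_ker_one_add_blockMatrix {v : BlockIdx a b c → ℤ} :
    v ∈ LinearMap.ker (1 + blockMatrix a b c).mulVecLin ↔ ∀ j, v j = -(sign j * v (swap j)) := by
  simp [funext_iff, blockMatrix_mulVec, add_eq_zero_iff_eq_neg]

def kerOneSubBlockMatrixEquiv :
    LinearMap.ker (1 - blockMatrix a b c).mulVecLin ≃ₗ[ℤ] (Fin a → ℤ) × (Fin c → ℤ) where
  toFun v := (fun i => v.1 (.inl (.inl i)), fun i => v.1 (.inr (.inl i)))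
  map_add' _ _ := rfl
  map_smul' _ _ := rfl
  invFun t := ⟨Sum.elim (Sum.elim t.1 0) (Sum.elim t.2 t.2), mem_ker_one_sub_blockMatrix.2 <| by
    rintro ((i | i) | (i | i)) <;> simp⟩
  left_inv v := by
    have hv := mem_ker_one_sub_blockMatrix.1 v.2
    refine Subtype.ext (funext ?_)
    rintro ((i | i) | (i | i))
    · rfl
    · have := hv (.inl (.inr i)); simp at this ⊢; omega
    · rfl
    · simpa using (hv (.inr (.inr i))).symm
  right_inv _ := rfl

def kerOneAddBlockMatrixEquiv :
    LinearMap.ker (1 + blockMatrix a b c).mulVecLin ≃ₗ[ℤ] (Fin b → ℤ) × (Fin c → ℤ) where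
  toFun v := (fun i => v.1 (.inl (.inr i)), fun i => v.1 (.inr (.inl i)))
  map_add' _ _ := rfl
  map_smul' _ _ := rfl
  invFun t := ⟨Sum.elim (Sum.elim 0 t.1) (Sum.elim t.2 (-t.2)), mem_ker_one_add_blockMatrix.2 <| by
    rintro ((i | i) | (i | i)) <;> simp⟩
  left_inv v := by
    have hv := mem_ker_one_add_blockMatrix.1 v.2
    refine Subtype.ext (funext ?_)
    rintro ((i | i) | (i | i))
    · have := hv (.inl (.inl i)); simp at this ⊢; omega
    · rfl
    · rfl
    · simpa using (hv (.inr (.inr i))).symm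
  right_inv _ := rfl

lemma finrank_ker_one_sub_blockMatrix :
    finrank ℤ (LinearMap.ker (1 - blockMatrix a b c).mulVecLin) = a + c := by
  simp [kerOneSubBlockMatrixEquiv.finrank_eq]

lemma finrank_ker_one_add_blockMatrix :
    finrank ℤ (LinearMap.ker (1 + blockMatrix a b c).mulVecLin) = b + c := by
  simp [kerOneAddBlockMatrixEquiv.finrank_eq]

variable (a b c) in
def pairParity : (BlockIdx a b c → ℤ) →ₗ[ℤ] (Fin c → ZMod 2) where
  toFun v i := ((v (.inr (.inl i)) + v (.inr (.inr i)) : ℤ) : ZMod 2)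
  map_add' v w := by funext i; simp only [Pi.add_apply]; push_cast; ring
  map_smul' m v := by
    funext i
    simp only [Pi.smul_apply, smul_eq_mul, RingHom.id_apply]
    push_cast
    ring

lemma pairParity_surjective : Function.Surjective (pairParity a b c) := fun t =>
  ⟨Sum.elim 0 (Sum.elim (fun i => ((t i).val : ℤ)) 0), funext fun i => by simp [pairParity]⟩

lemma ker_pairParity : LinearMap.ker (pairParity a b c) =
    LinearMap.ker (1 - blockMatrix a b c).mulVecLin ⊔
      LinearMap.ker (1 + blockMatrix a b c).mulVecLin := by
  refine le_antisymm (fun v hv => ?_) (sup_le (fun v hv => ?_) fun v hv => ?_)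
  · have hdvd i : (2 : ℤ) ∣ v (.inr (.inl i)) + v (.inr (.inr i)) :=
      (ZMod.intCast_zmod_eq_zero_iff_dvd _ 2).1 (congrFun hv i)
    choose s hs using hdvd
    refine Submodule.mem_sup.2 ⟨Sum.elim (Sum.elim (fun i => v (.inl (.inl i))) 0) (Sum.elim s s),
      mem_ker_one_sub_blockMatrix.2 ?_, _, mem_ker_one_add_blockMatrix.2 ?_, add_sub_cancel _ v⟩
    · rintro ((i | i) | (i | i)) <;> simp
    · rintro ((i | i) | (i | i)) <;> simp
      all_goals linarith [hs i]
  · have h i := mem_ker_one_sub_blockMatrix.1 hv (.inr (.inr i))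
    simp only [swap_inr_inr, sign_inr, one_mul] at h
    ext i
    simp [pairParity, h, CharTwo.add_self_eq_zero]
  · have h i := mem_ker_one_add_blockMatrix.1 hv (.inr (.inr i))
    simp only [swap_inr_inr, sign_inr, one_mul] at h
    ext i
    simp [pairParity, h, CharTwo.add_self_eq_zero]

lemma card_quotient_ker_sup_ker_blockMatrix :
    Nat.card ((BlockIdx a b c → ℤ) ⧸ (LinearMap.ker (1 - blockMatrix a b c).mulVecLin ⊔
      LinearMap.ker (1 + blockMatrix a b c).mulVecLin)) = 2 ^ c := by
  rw [← ker_pairParity, Nat.card_congr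
    ((pairParity a b c).quotKerEquivOfSurjective pairParity_surjective).toEquiv]
  simp

end BlockMatrix

section Conjugation

variable {ι κ : Type*} [Fintype ι] [Fintype κ] [DecidableEq ι] [DecidableEq κ]

lemma exists_mul_eq_mul_blockMatrix {A : Matrix ι ι ℤ} (hA : A * A = 1) :
    ∃ (a b c : ℕ) (E : Matrix ι (BlockIdx a b c) ℤ) (E' : Matrix (BlockIdx a b c) ι ℤ),
      E * E' = 1 ∧ E' * E = 1 ∧ A * E = E * blockMatrix a b c := by
  have hf : Function.Involutive A.mulVecLin := fun x => by simp [Matrix.mulVec_mulVec, hA]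
  obtain ⟨a, b, c, v, hv⟩ := exists_basis_involution (N := ι → ℤ) Int.even_or_odd' two_ne_zero hf
  refine ⟨a, b, c, (Pi.basisFun ℤ ι).toMatrix v, v.toMatrix (Pi.basisFun ℤ ι),
    Basis.toMatrix_mul_toMatrix_flip _ _, Basis.toMatrix_mul_toMatrix_flip _ _, ?_⟩
  ext i j
  rw [mul_blockMatrix_apply]
  simpa [Matrix.mul_apply, Matrix.mulVec, dotProduct, Basis.toMatrix_apply] using congrFun (hv j) i

def mulVecLinEquiv {R : Type*} [CommRing R] {E : Matrix ι κ R} {E' : Matrix κ ι R}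
    (hEE' : E * E' = 1) (hE'E : E' * E = 1) : (ι → R) ≃ₗ[R] (κ → R) :=
  LinearEquiv.ofLinearMap E'.mulVecLin E.mulVecLin
    (by rw [← Matrix.mulVecLin_mul, hE'E, Matrix.mulVecLin_one])
    (by rw [← Matrix.mulVecLin_mul, hEE', Matrix.mulVecLin_one])

lemma map_ker_mulVecLin {R : Type*} [CommRing R] {E : Matrix ι κ R} {E' : Matrix κ ι R}
    (hEE' : E * E' = 1) (hE'E : E' * E = 1) {X : Matrix ι ι R} {Y : Matrix κ κ R}
    (hXY : X * E = E * Y) :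
    (LinearMap.ker X.mulVecLin).map (mulVecLinEquiv hEE' hE'E : (ι → R) →ₗ[R] κ → R) =
      LinearMap.ker Y.mulVecLin := by
  have hYE' := Matrix.mul_eq_mul_of_mul_eq_mul hEE' hE'E hXY
  refine le_antisymm ?_ fun w hw => ⟨E *ᵥ w, ?_, ?_⟩
  · rintro _ ⟨v, hv : X *ᵥ v = 0, rfl⟩
    show Y *ᵥ (E' *ᵥ v) = 0
    rw [Matrix.mulVec_mulVec, ← hYE', ← Matrix.mulVec_mulVec, hv, Matrix.mulVec_zero]
  · change Y *ᵥ w = 0 at hw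
    show X *ᵥ (E *ᵥ w) = 0
    rw [Matrix.mulVec_mulVec, hXY, ← Matrix.mulVec_mulVec, hw, Matrix.mulVec_zero]
  · simp [mulVecLinEquiv, Matrix.mulVec_mulVec, hE'E]

variable {A : Matrix ι ι ℤ} {a b c : ℕ} {E : Matrix ι (BlockIdx a b c) ℤ}
  {E' : Matrix (BlockIdx a b c) ι ℤ} (hEE' : E * E' = 1) (hE'E : E' * E = 1)
  (hAE : A * E = E * blockMatrix a b c)
include hEE' hE'E hAE

lemma map_ker_one_sub_mulVecLin :
    (LinearMap.ker (1 - A).mulVecLin).map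
      (mulVecLinEquiv hEE' hE'E : (ι → ℤ) →ₗ[ℤ] BlockIdx a b c → ℤ) =
      LinearMap.ker (1 - blockMatrix a b c).mulVecLin :=
  map_ker_mulVecLin hEE' hE'E (by rw [Matrix.sub_mul, Matrix.mul_sub, hAE, E.one_mul, E.mul_one])

lemma map_ker_one_add_mulVecLin :
    (LinearMap.ker (1 + A).mulVecLin).map
      (mulVecLinEquiv hEE' hE'E : (ι → ℤ) →ₗ[ℤ] BlockIdx a b c → ℤ) =
      LinearMap.ker (1 + blockMatrix a b c).mulVecLin :=
  map_ker_mulVecLin hEE' hE'E (by rw [Matrix.add_mul, Matrix.mul_add, hAE, E.one_mul, E.mul_one])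

lemma finrank_ker_one_sub_eq : finrank ℤ (LinearMap.ker (1 - A).mulVecLin) = a + c := by
  rw [← finrank_ker_one_sub_blockMatrix (b := b), ← map_ker_one_sub_mulVecLin hEE' hE'E hAE,
    LinearEquiv.finrank_map_eq]

lemma finrank_ker_one_add_eq : finrank ℤ (LinearMap.ker (1 + A).mulVecLin) = b + c := by
  rw [← finrank_ker_one_add_blockMatrix (a := a), ← map_ker_one_add_mulVecLin hEE' hE'E hAE,
    LinearEquiv.finrank_map_eq]

lemma card_quotient_ker_sup_ker_eq :
    Nat.card ((ι → ℤ) ⧸ (LinearMap.ker (1 - A).mulVecLin ⊔ LinearMap.ker (1 + A).mulVecLin)) =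
      2 ^ c := by
  rw [← card_quotient_ker_sup_ker_blockMatrix (a := a) (b := b)]
  refine Nat.card_congr (Submodule.Quotient.equiv _ _ (mulVecLinEquiv hEE' hE'E) ?_).toEquiv
  rw [Submodule.map_sup, map_ker_one_sub_mulVecLin hEE' hE'E hAE,
    map_ker_one_add_mulVecLin hEE' hE'E hAE]

end Conjugation

section Torus

variable {ι κ μ : Type*}

noncomputable def unitsConj : ℂˣ →* ℂˣ := Units.map (starRingEnd ℂ).toMonoidHom

@[simp] lemma coe_unitsConj (u : ℂˣ) : (unitsConj u : ℂ) = conj (u : ℂ) := rfl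

@[simp] lemma unitsConj_unitsConj (u : ℂˣ) : unitsConj (unitsConj u) = u := by ext; simp

lemma continuous_unitsConj : Continuous unitsConj :=
  Continuous.units_map _ Complex.continuous_conj

variable (ι) in
noncomputable def torusConj : (ι → ℂˣ) →* (ι → ℂˣ) := MonoidHom.compLeft unitsConj ι

@[simp] lemma torusConj_apply (z : ι → ℂˣ) (i : ι) : torusConj ι z i = unitsConj (z i) := rfl

variable [Fintype ι]

/-- `matZPow` for arbitrary finite index types. -/
noncomputable def torusHom (B : Matrix κ ι ℤ) : (ι → ℂˣ) →* (κ → ℂˣ) where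
  toFun z j := ∏ i, z i ^ B j i
  map_one' := by funext j; simp
  map_mul' x y := by funext j; simp [mul_zpow, Finset.prod_mul_distrib]

lemma torusHom_apply (B : Matrix κ ι ℤ) (z : ι → ℂˣ) (j : κ) :
    torusHom B z j = ∏ i, z i ^ B j i := rfl

lemma continuous_torusHom (B : Matrix κ ι ℤ) : Continuous (torusHom B) :=
  continuous_pi fun j => continuous_finsetProd _ fun i _ => (continuous_apply i).zpow (B j i)

lemma torusHom_torusHom [Fintype κ] (B : Matrix κ ι ℤ) (C : Matrix μ κ ℤ) (z : ι → ℂˣ) :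
    torusHom C (torusHom B z) = torusHom (C * B) z := by
  funext k
  simp only [torusHom_apply, Matrix.mul_apply, ← Finset.prod_zpow, ← zpow_mul]
  rw [Finset.prod_comm]
  refine Finset.prod_congr rfl fun i _ => ?_
  rw [← Finset.prod_zpow_eq_zpow_sum]
  simp only [mul_comm]

lemma torusHom_one [DecidableEq ι] (z : ι → ℂˣ) : torusHom (1 : Matrix ι ι ℤ) z = z := by
  funext j
  simp [torusHom_apply, Matrix.one_apply]

lemma torusHom_torusConj [Fintype κ] (B : Matrix κ ι ℤ) (z : ι → ℂˣ) :
    torusHom B (torusConj ι z) = torusConj κ (torusHom B z) := by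
  funext j
  simp [torusConj, torusHom_apply, map_prod, map_zpow]

/-- The involution `σ_B` of `(ℂˣ)^ι`; `sigmaMat` is the case `ι = Fin n`. -/
noncomputable def torusInvol (B : Matrix ι ι ℤ) : (ι → ℂˣ) →* (ι → ℂˣ) :=
  (torusHom B).comp (torusConj ι)

variable [Fintype κ] [DecidableEq ι] [DecidableEq κ] {E : Matrix ι κ ℤ} {E' : Matrix κ ι ℤ}

noncomputable def torusEquiv (hEE' : E * E' = 1) (hE'E : E' * E = 1) : (ι → ℂˣ) ≃ₜ* (κ → ℂˣ) where
  toFun := torusHom E'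
  invFun := torusHom E
  left_inv z := by rw [torusHom_torusHom, hEE', torusHom_one]
  right_inv z := by rw [torusHom_torusHom, hE'E, torusHom_one]
  map_mul' := map_mul _
  continuous_toFun := continuous_torusHom E'
  continuous_invFun := continuous_torusHom E

lemma torusEquiv_torusInvol (hEE' : E * E' = 1) (hE'E : E' * E = 1) {A : Matrix ι ι ℤ}
    {D : Matrix κ κ ℤ} (hAE : A * E = E * D) (z : ι → ℂˣ) :
    torusEquiv hEE' hE'E (torusInvol A z) = torusInvol D (torusEquiv hEE' hE'E z) := by
  show torusHom E' (torusHom A (torusConj ι z)) = torusHom D (torusConj κ (torusHom E' z))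
  rw [← torusHom_torusConj, torusHom_torusHom, torusHom_torusHom,
    Matrix.mul_eq_mul_of_mul_eq_mul hEE' hE'E hAE]

end Torus

section FixedSubgroup

lemma mem_fixedSubgroup {G : Type*} [Group G] {σ : G →* G} {z : G} :
    z ∈ fixedSubgroup σ ↔ σ z = z := Iff.rfl

def ContinuousMulEquiv.fixedSubgroupCongr {G H : Type*} [Group G] [Group H] [TopologicalSpace G]
    [TopologicalSpace H] {σ : G →* G} {τ : H →* H} (Θ : G ≃ₜ* H) (h : ∀ z, Θ (σ z) = τ (Θ z)) :
    fixedSubgroup σ ≃ₜ* fixedSubgroup τ where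
  toFun z := ⟨Θ z.1, by rw [mem_fixedSubgroup, ← h, mem_fixedSubgroup.1 z.2]⟩
  invFun w := ⟨Θ.symm w.1, Θ.injective <| by
    rw [h, Θ.apply_symm_apply, mem_fixedSubgroup.1 w.2]⟩
  left_inv z := Subtype.ext (Θ.symm_apply_apply z.1)
  right_inv w := Subtype.ext (Θ.apply_symm_apply w.1)
  map_mul' z w := Subtype.ext (map_mul Θ z.1 w.1)
  continuous_toFun := (Θ.continuous.comp continuous_subtype_val).subtype_mk _
  continuous_invFun := (Θ.symm.continuous.comp continuous_subtype_val).subtype_mk _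

variable {a b c : ℕ}

lemma torusHom_blockMatrix (z : BlockIdx a b c → ℂˣ) (j : BlockIdx a b c) :
    torusHom (blockMatrix a b c) z j = z (swap j) ^ sign j := by
  simp [torusHom_apply, blockMatrix]

lemma mem_fixedSubgroup_blockMatrix {z : BlockIdx a b c → ℂˣ} :
    z ∈ fixedSubgroup (torusInvol (blockMatrix a b c)) ↔
      (∀ i, unitsConj (z (.inl (.inl i))) = z (.inl (.inl i))) ∧
      (∀ i, unitsConj (z (.inl (.inr i))) = (z (.inl (.inr i)))⁻¹) ∧
      ∀ i, unitsConj (z (.inr (.inl i))) = z (.inr (.inr i)) := by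
  simp only [mem_fixedSubgroup, funext_iff, Sum.forall, torusInvol, MonoidHom.comp_apply,
    torusHom_blockMatrix, torusConj_apply, swap_inl, swap_inr_inl, swap_inr_inr, sign_inl_inl,
    sign_inl_inr, sign_inr, zpow_one, zpow_neg_one, inv_eq_iff_eq_inv]
  refine ⟨fun ⟨⟨h₁, h₂⟩, _, h₃⟩ => ⟨h₁, h₂, h₃⟩, fun ⟨h₁, h₂, h₃⟩ => ⟨⟨h₁, h₂⟩, fun i => ?_, h₃⟩⟩
  rw [← h₃, unitsConj_unitsConj]

end FixedSubgroup

section BlockFixedSubgroup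

noncomputable def unitsOfReal : ℝˣ →* ℂˣ := Units.map Complex.ofRealHom.toMonoidHom

@[simp] lemma coe_unitsOfReal (x : ℝˣ) : (unitsOfReal x : ℂ) = ((x : ℝ) : ℂ) := rfl

lemma continuous_unitsOfReal : Continuous unitsOfReal :=
  Continuous.units_map _ Complex.continuous_ofReal

lemma re_ne_zero_of_unitsConj_eq {u : ℂˣ} (h : unitsConj u = u) : (u : ℂ).re ≠ 0 :=
  fun h0 => u.ne_zero <| by
    rw [← Complex.conj_eq_iff_re.1 (congrArg Units.val h), h0, Complex.ofReal_zero]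

noncomputable def realUnitOfConjEq (u : ℂˣ) (h : unitsConj u = u) : ℝˣ :=
  Units.mk0 (u : ℂ).re (re_ne_zero_of_unitsConj_eq h)

lemma unitsOfReal_realUnitOfConjEq (u : ℂˣ) (h : unitsConj u = u) :
    unitsOfReal (realUnitOfConjEq u h) = u :=
  Units.ext (Complex.conj_eq_iff_re.1 (congrArg Units.val h))

noncomputable def circleOfConjEqInv (u : ℂˣ) (h : unitsConj u = u⁻¹) : Circle :=
  ⟨u, by
    have h1 : (u : ℂ) * conj (u : ℂ) = 1 := by rw [← coe_unitsConj, h, Units.mul_inv]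
    rw [Complex.mul_conj', ← Complex.ofReal_one, ← Complex.ofReal_pow] at h1
    simpa [Submonoid.unitSphere, mem_sphere_zero_iff_norm] using
      (pow_eq_one_iff_of_nonneg (norm_nonneg _) two_ne_zero).1 (Complex.ofReal_injective h1)⟩

@[simp] lemma toUnits_circleOfConjEqInv (u : ℂˣ) (h : unitsConj u = u⁻¹) :
    Circle.toUnits (circleOfConjEqInv u h) = u := Units.ext rfl

lemma continuous_circle_toUnits : Continuous Circle.toUnits :=
  Units.continuous_iff.2 ⟨continuous_subtype_val, by
    have : Continuous fun z : Circle => ((z⁻¹ : Circle) : ℂ) :=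
      continuous_subtype_val.comp continuous_inv
    simpa using this⟩

lemma unitsConj_circle_toUnits (w : Circle) :
    unitsConj (Circle.toUnits w) = (Circle.toUnits w)⁻¹ := by
  rw [← map_inv]
  exact Units.ext (Circle.coe_inv_eq_conj w).symm

noncomputable def blockFixedEquiv (a b c : ℕ) :
    ((Fin a → ℝˣ) × (Fin b → Circle) × (Fin c → ℂˣ)) ≃ₜ*
      fixedSubgroup (torusInvol (blockMatrix a b c)) where
  toFun t := ⟨Sum.elim (Sum.elim (unitsOfReal ∘ t.1) (Circle.toUnits ∘ t.2.1))
      (Sum.elim t.2.2 (unitsConj ∘ t.2.2)), mem_fixedSubgroup_blockMatrix.2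
    ⟨fun i => Units.ext (by simp), fun i => unitsConj_circle_toUnits _, fun i => rfl⟩⟩
  invFun z :=
    (fun i => realUnitOfConjEq _ ((mem_fixedSubgroup_blockMatrix.1 z.2).1 i),
      fun i => circleOfConjEqInv _ ((mem_fixedSubgroup_blockMatrix.1 z.2).2.1 i),
      fun i => z.1 (.inr (.inl i)))
  left_inv t := by
    refine Prod.ext (funext fun i => Units.ext ?_) (Prod.ext (funext fun i => Subtype.ext rfl) rfl)
    simp [realUnitOfConjEq]
  right_inv z := by
    refine Subtype.ext (funext ?_)
    rintro ((i | i) | (i | i))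
    · exact unitsOfReal_realUnitOfConjEq _ ((mem_fixedSubgroup_blockMatrix.1 z.2).1 i)
    · exact toUnits_circleOfConjEqInv _ ((mem_fixedSubgroup_blockMatrix.1 z.2).2.1 i)
    · rfl
    · exact (mem_fixedSubgroup_blockMatrix.1 z.2).2.2 i
  map_mul' s t := by
    refine Subtype.ext (funext ?_)
    rintro ((i | i) | (i | i)) <;> simp
  continuous_toFun := by
    refine Continuous.subtype_mk (continuous_pi ?_) _
    rintro ((i | i) | (i | i))
    · exact continuous_unitsOfReal.comp ((continuous_apply i).comp continuous_fst)
    · exact continuous_circle_toUnits.comp ((continuous_apply i).comp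
        (continuous_fst.comp continuous_snd))
    · exact (continuous_apply i).comp (continuous_snd.comp continuous_snd)
    · exact continuous_unitsConj.comp ((continuous_apply i).comp
        (continuous_snd.comp continuous_snd))
  continuous_invFun := by
    have hz : ∀ j : BlockIdx a b c, Continuous fun z : fixedSubgroup (torusInvol
        (blockMatrix a b c)) => z.1 j := fun j => (continuous_apply j).comp continuous_subtype_val
    refine continuous_prodMk.2 ⟨continuous_pi fun i => ?_, continuous_prodMk.2
      ⟨continuous_pi fun i => (Units.continuous_val.comp (hz _)).subtype_mk _,
        continuous_pi fun i => hz _⟩⟩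
    have hre : Continuous fun z : fixedSubgroup (torusInvol (blockMatrix a b c)) =>
        (z.1 (.inl (.inl i)) : ℂ).re :=
      Complex.continuous_re.comp (Units.continuous_val.comp (hz _))
    refine Units.continuous_iff.2 ⟨hre, ?_⟩
    simp only [realUnitOfConjEq, Units.val_inv_eq_inv_val, Units.val_mk0]
    exact hre.inv₀ fun z => re_ne_zero_of_unitsConj_eq ((mem_fixedSubgroup_blockMatrix.1 z.2).1 i)

end BlockFixedSubgroup

/-- **Real points of a real torus.** Let `A` be an `n×n` integer matrix with `A² = I`,
`p = rank ker(I−A)`, `q = rank ker(I+A)`, and `r = dim_{F₂} ℤⁿ/(ker(I−A)+ker(I+A))`.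
Then the fixed subgroup of `σ_A` in `(ℂˣ)ⁿ` is isomorphic, as a topological group, to
`(ℝˣ)^{p−r} × (S¹)^{q−r} × (ℂˣ)^r`. -/
theorem stmt_2 (n p q r : ℕ) (A : Matrix (Fin n) (Fin n) ℤ) (hA : A * A = 1)
    (hp : Module.finrank ℤ (LinearMap.ker (Matrix.mulVecLin (1 - A))) = p)
    (hq : Module.finrank ℤ (LinearMap.ker (Matrix.mulVecLin (1 + A))) = q)
    (hr : Nat.card ((Fin n → ℤ) ⧸ (LinearMap.ker (Matrix.mulVecLin (1 - A)) ⊔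
      LinearMap.ker (Matrix.mulVecLin (1 + A)))) = 2 ^ r) :
    ∃ e : fixedSubgroup (sigmaMat A) ≃*
        ((Fin (p - r) → ℝˣ) × (Fin (q - r) → Circle) × (Fin r → ℂˣ)),
      Continuous e ∧ Continuous e.symm := by
  obtain ⟨a, b, c, E, E', hEE', hE'E, hAE⟩ := exists_mul_eq_mul_blockMatrix hA
  obtain rfl := (finrank_ker_one_sub_eq hEE' hE'E hAE).symm.trans hp
  obtain rfl := (finrank_ker_one_add_eq hEE' hE'E hAE).symm.trans hq
  obtain rfl : c = r :=
    Nat.pow_right_injective le_rfl ((card_quotient_ker_sup_ker_eq hEE' hE'E hAE).symm.trans hr)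
  rw [Nat.add_sub_cancel, Nat.add_sub_cancel]
  let e := (ContinuousMulEquiv.fixedSubgroupCongr (torusEquiv hEE' hE'E)
    (torusEquiv_torusInvol hEE' hE'E hAE)).trans (blockFixedEquiv a b c).symm
  exact ⟨e.toMulEquiv, e.continuous, e.symm.continuous⟩
end

section
/- Let (N, τ) be a ℤ[τ]-lattice. Regard the multiplicative group ℂˣ as a ℤ-module (written additively), form the ℤ-module T = N ⊗_ℤ ℂˣ, and equip T with the involution σ = τ ⊗ conj, where conj is complex conjugation on ℂˣ. Then there are group isomorphisms ker(1+σ)/im(1−σ) ≅ ker(1+τ)/im(1−τ) and ker(1−σ)/im(1+σ) ≅ ker(1−τ)/im(1+τ); that is, H^k(ℤ/2; N ⊗_ℤ ℂˣ) ≅ H^k(ℤ/2; N) for every k ≥ 1. -/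
/-- The "cohomology" quotient `ker f / im g` (intersected with `ker f`) of an abelian
group equipped with two endomorphisms; for an involution `τ`, taking `f = 1+τ`, `g = 1−τ`
gives `H¹(ℤ/2;·)` and `f = 1−τ`, `g = 1+τ` gives `H²(ℤ/2;·)`. -/
abbrev Hq {A : Type*} [AddCommGroup A] (f g : A →+ A) :=
  ↥f.ker ⧸ (g.range.addSubgroupOf f.ker)

/-- Complex conjugation on `ℂˣ`, viewed as a ℤ-linear endomorphism of
the additively-written group `Additive ℂˣ`. -/
noncomputable def conjAddHom : Additive ℂˣ →ₗ[ℤ] Additive ℂˣ :=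
  AddMonoidHom.toIntLinearMap
    (MonoidHom.toAdditive (Units.map (starRingEnd ℂ).toMonoidHom))

/-!
The exponential `z ↦ exp (π i z)` gives a short exact sequence `0 → 2ℤ → ℂ → ℂˣ → 0`,
equivariant for `-conj` on `ℂ` and `conj` on `ℂˣ`; on the kernel `2ℤ` the involution acts
by `-1`. Tensoring with the flat module `N` yields `0 → (N, -τ) → N ⊗ ℂ → N ⊗ ℂˣ → 0`. The
middle term is uniquely 2-divisible, so its `ℤ/2`-cohomology vanishes and the connecting maps
are isomorphisms `H^k(N ⊗ ℂˣ) ≅ H^{k+1}(N, -τ) = H^k(N, τ)`. Concretely, the inverse of the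
connecting map is induced by `n ↦ n ⊗ (-1)`.
-/

namespace Hq

variable {A B : Type*} [AddCommGroup A] [AddCommGroup B] {f g : A →+ A} {f' g' : B →+ B}

def map (φ : A →+ B) (hf : ∀ a, f' (φ a) = φ (f a)) (hg : ∀ a, g' (φ a) = φ (g a)) :
    Hq f g →+ Hq f' g' :=
  QuotientAddGroup.map _ _
    ((φ.comp f.ker.subtype).codRestrict f'.ker fun a => by simp [hf, f.mem_ker.1 a.2])
    (by
      rintro a ⟨c, hc⟩
      exact ⟨φ c, by rw [hg, hc]; rfl⟩)

theorem map_bijective (φ : A →+ B) (hf : ∀ a, f' (φ a) = φ (f a))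
    (hg : ∀ a, g' (φ a) = φ (g a))
    (surj : ∀ b, f' b = 0 → ∃ a, f a = 0 ∧ ∃ c, g' c = b - φ a)
    (inj : ∀ a, f a = 0 → ∀ c, g' c = φ a → ∃ d, g d = a) :
    Function.Bijective (map φ hf hg) := by
  constructor
  · rw [injective_iff_map_eq_zero]
    rintro ⟨a⟩ ha
    obtain ⟨c, hc⟩ := (QuotientAddGroup.eq_zero_iff _).1 ha
    exact (QuotientAddGroup.eq_zero_iff _).2 (inj a a.2 c hc)
  · rintro ⟨b⟩
    obtain ⟨a, ha, c, hc⟩ := surj b b.2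
    refine ⟨QuotientAddGroup.mk ⟨a, ha⟩, QuotientAddGroup.eq.2 ⟨c, ?_⟩⟩
    change g' c = -φ a + b
    rw [hc, sub_eq_neg_add, add_comm]

end Hq

section TwistedExtension

variable {N V T : Type*} [AddCommGroup N] [AddCommGroup V] [AddCommGroup T]

/-- `0 → (N, -τ) → (V, σV) → (T, σ) → 0`, with first map `2 • ι`, is a short exact sequence of
groups with involution whose middle term is uniquely 2-divisible. -/
structure IsAcyclicTwistedExtension (τ : N →+ N) (σV : V →+ V) (σ : T →+ T) (ι : N →+ V)
    (E : V →+ T) : Prop where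
  involutive : Function.Involutive σV
  σV_ι : ∀ n, σV (ι n) = -ι (τ n)
  E_σV : ∀ v, E (σV v) = σ (E v)
  injective_ι : Function.Injective ι
  surjective_E : Function.Surjective E
  exact : Function.Exact (fun n => 2 • ι n) E
  bijective_two_nsmul : Function.Bijective fun v : V => 2 • v

namespace IsAcyclicTwistedExtension

variable {τ : N →+ N} {σV : V →+ V} {σ : T →+ T} {ι : N →+ V} {E : V →+ T}

theorem neg (h : IsAcyclicTwistedExtension τ σV σ ι E) :
    IsAcyclicTwistedExtension (-τ) (-σV) (-σ) ι E where
  involutive v := by simp [h.involutive v]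
  σV_ι n := by simp [h.σV_ι]
  E_σV v := by simp [h.E_σV]
  injective_ι := h.injective_ι
  surjective_E := h.surjective_E
  exact := h.exact
  bijective_two_nsmul := h.bijective_two_nsmul

theorem E_two_nsmul_ι (h : IsAcyclicTwistedExtension τ σV σ ι E) (n : N) :
    E (2 • ι n) = 0 :=
  (h.exact _).2 ⟨n, rfl⟩

theorem σ_E_ι (h : IsAcyclicTwistedExtension τ σV σ ι E) (n : N) :
    σ (E (ι n)) = E (ι (τ n)) := by
  rw [← h.E_σV, h.σV_ι, map_neg, neg_eq_iff_add_eq_zero, ← two_nsmul, ← map_nsmul,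
    h.E_two_nsmul_ι]

theorem exists_cocycle_cohomologous (h : IsAcyclicTwistedExtension τ σV σ ι E) (t : T)
    (ht : t + σ t = 0) : ∃ n, n + τ n = 0 ∧ ∃ s, s - σ s = t - E (ι n) := by
  obtain ⟨z, rfl⟩ := h.surjective_E t
  obtain ⟨m, hm⟩ := (h.exact (z + σV z)).1 (by rw [map_add, h.E_σV, ht])
  replace hm : 2 • ι m = z + σV z := hm
  have hτm : 2 • ι (τ m) = -(z + σV z) := by
    rw [← neg_neg (2 • ι (τ m)), ← smul_neg, ← h.σV_ι, ← map_nsmul, hm, map_add, h.involutive z,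
      add_comm]
  refine ⟨m, h.injective_ι (h.bijective_two_nsmul.1 ?_), ?_⟩
  · simp only [map_add, map_zero, nsmul_add, hm, hτm, smul_zero, add_neg_cancel]
  obtain ⟨w, hw⟩ := h.bijective_two_nsmul.2 z
  replace hw : 2 • w = z := hw
  have hz : z = w - σV w + ι m := h.bijective_two_nsmul.1 <| by
    simp only [nsmul_add, nsmul_sub, ← map_nsmul, hw, hm]
    abel
  refine ⟨E w, ?_⟩
  conv_rhs => rw [hz]
  rw [map_add, map_sub, h.E_σV, add_sub_cancel_right]

theorem exists_coboundary_of_E_ι_coboundary (h : IsAcyclicTwistedExtension τ σV σ ι E) (n : N)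
    (hn : n + τ n = 0) (s : T) (hs : s - σ s = E (ι n)) : ∃ m, m - τ m = n := by
  obtain ⟨z, rfl⟩ := h.surjective_E s
  obtain ⟨m, hm⟩ := (h.exact (ι n - (z - σV z))).1 <| by
    rw [map_sub, map_sub, h.E_σV, hs, sub_self]
  replace hm : 2 • ι m = ι n - (z - σV z) := hm
  have hτm : 2 • ι (τ m) = ι (τ n) - (z - σV z) := by
    rw [← neg_neg (2 • ι (τ m)), ← smul_neg, ← h.σV_ι, ← map_nsmul, hm, map_sub, map_sub,
      h.involutive z, h.σV_ι]
    abel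
  refine ⟨m, h.injective_ι (h.bijective_two_nsmul.1 ?_)⟩
  rw [eq_neg_of_add_eq_zero_right hn, map_neg] at hτm
  simp only [map_sub, nsmul_sub, hm, hτm]
  abel

theorem nonempty_addEquiv_hq_add_sub (h : IsAcyclicTwistedExtension τ σV σ ι E) :
    Nonempty (Hq (.id T + σ) (.id T - σ) ≃+ Hq (.id N + τ) (.id N - τ)) := by
  have hφ : ∀ n, σ (E (ι n)) = E (ι (τ n)) := h.σ_E_ι
  refine ⟨(AddEquiv.ofBijective _
    (Hq.map_bijective (E.comp ι) (fun n => ?_) (fun n => ?_) (fun t ht => ?_)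
      (fun n hn s hs => ?_))).symm⟩
  · simp [hφ]
  · simp [hφ]
  · simp only [AddMonoidHom.add_apply, AddMonoidHom.sub_apply, AddMonoidHom.id_apply,
      AddMonoidHom.comp_apply] at ht ⊢
    exact h.exists_cocycle_cohomologous t ht
  · simp only [AddMonoidHom.add_apply, AddMonoidHom.sub_apply, AddMonoidHom.id_apply,
      AddMonoidHom.comp_apply] at hn hs ⊢
    exact h.exists_coboundary_of_E_ι_coboundary n hn s hs

theorem nonempty_addEquiv_hq_sub_add (h : IsAcyclicTwistedExtension τ σV σ ι E) :
    Nonempty (Hq (.id T - σ) (.id T + σ) ≃+ Hq (.id N - τ) (.id N + τ)) := by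
  have h' := h.neg.nonempty_addEquiv_hq_add_sub
  rwa [← sub_eq_add_neg, sub_neg_eq_add, ← sub_eq_add_neg, sub_neg_eq_add] at h'

end IsAcyclicTwistedExtension

end TwistedExtension

open Complex ComplexConjugate TensorProduct LinearMap
open scoped Real

noncomputable def expPiI : ℂ →ₗ[ℤ] Additive ℂˣ :=
  ((MonoidHom.toAdditiveRight expMonoidHom.toHomUnits).comp
    (AddMonoidHom.mulLeft (π * I))).toIntLinearMap

@[simp]
theorem val_toMul_expPiI (z : ℂ) : ((expPiI z).toMul : ℂ) = exp (π * I * z) := rfl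

theorem expPiI_eq_zero_iff {z : ℂ} : expPiI z = 0 ↔ exp (π * I * z) = 1 := by
  rw [← val_toMul_expPiI, Units.val_eq_one]
  rfl

theorem expPiI_surjective : Function.Surjective expPiI := by
  intro u
  have hπI : (π : ℂ) * I ≠ 0 := by simp [Real.pi_ne_zero]
  refine ⟨log u.toMul / (π * I), Additive.toMul.injective (Units.ext ?_)⟩
  rw [val_toMul_expPiI, mul_div_cancel₀ _ hπI, exp_log u.toMul.ne_zero]

theorem exact_two_smul_algebraMap_expPiI :
    Function.Exact (2 • Algebra.linearMap ℤ ℂ : ℤ →ₗ[ℤ] ℂ) expPiI := by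
  intro z
  have hπI : (π : ℂ) * I ≠ 0 := by simp [Real.pi_ne_zero]
  rw [expPiI_eq_zero_iff, exp_eq_one_iff]
  simp only [Set.mem_range, LinearMap.smul_apply, Algebra.linearMap_apply, eq_intCast]
  refine exists_congr fun n => ⟨fun h => ?_, fun h => ?_⟩
  · exact mul_left_cancel₀ hπI (by linear_combination -h)
  · linear_combination (π * I) * -h

theorem expPiI_neg_conj (z : ℂ) : expPiI (-conj z) = conjAddHom (expPiI z) := by
  apply Additive.toMul.injective (Units.ext _)
  simp [conjAddHom, ← exp_conj, ← exp_neg]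

section TensorUnits

variable (N : Type*) [AddCommGroup N] [Module ℤ N]

theorem bijective_two_nsmul_tensor_complex : Function.Bijective fun v : N ⊗[ℤ] ℂ => 2 • v := by
  let two : ℂ ≃ₗ[ℤ] ℂ := (LinearEquiv.smulOfNeZero ℂ ℂ 2 two_ne_zero).restrictScalars ℤ
  convert (two.lTensor N).bijective with v
  induction v using TensorProduct.induction_on with
  | zero => simp
  | tmul n z => simp [two, two_smul, two_mul, TensorProduct.tmul_add]
  | add v w hv hw => simp_all [smul_add]

theorem injective_tmul_one [Module.Flat ℤ N] :
    Function.Injective fun n : N => n ⊗ₜ[ℤ] (1 : ℂ) := by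
  intro a b hab
  have h : a ⊗ₜ[ℤ] (1 : ℤ) = b ⊗ₜ[ℤ] (1 : ℤ) :=
    Module.Flat.lTensor_preserves_injective_linearMap (M := N) (Algebra.linearMap ℤ ℂ)
      Int.cast_injective (by simpa using hab)
  simpa using congrArg (TensorProduct.rid ℤ N) h

theorem exact_two_nsmul_tmul_one_lTensor_expPiI :
    Function.Exact (fun n : N => 2 • n ⊗ₜ[ℤ] (1 : ℂ)) (lTensor N expPiI) := by
  intro v
  rw [lTensor_exact N exact_two_smul_algebraMap_expPiI expPiI_surjective v]
  constructor
  · rintro ⟨x, rfl⟩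
    obtain ⟨n, rfl⟩ := (TensorProduct.rid ℤ N).symm.surjective x
    exact ⟨n, by simp [two_nsmul, ← TensorProduct.tmul_add, one_add_one_eq_two]⟩
  · rintro ⟨n, rfl⟩
    exact ⟨n ⊗ₜ 1, by simp [two_nsmul, ← TensorProduct.tmul_add, one_add_one_eq_two]⟩

theorem isAcyclicTwistedExtension_tensor_units [Module.Flat ℤ N] (τ : N →ₗ[ℤ] N)
    (hτ : ∀ x, τ (τ x) = x) :
    IsAcyclicTwistedExtension τ.toAddMonoidHom
      (map τ (-(starRingEnd ℂ).toIntAlgHom.toLinearMap)).toAddMonoidHom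
      (map τ conjAddHom).toAddMonoidHom (.mk' (· ⊗ₜ 1) fun a b => TensorProduct.add_tmul a b 1)
      (lTensor N expPiI).toAddMonoidHom where
  involutive v := by
    induction v using TensorProduct.induction_on with
    | zero => simp
    | tmul n z => simp [hτ]
    | add v w hv hw => simp_all
  σV_ι n := by simp [TensorProduct.tmul_neg]
  E_σV v := by
    induction v using TensorProduct.induction_on with
    | zero => simp
    | tmul n z => simp [← expPiI_neg_conj]
    | add v w hv hw => simp_all
  injective_ι := injective_tmul_one N
  surjective_E := LinearMap.lTensor_surjective N expPiI_surjective
  exact := exact_two_nsmul_tmul_one_lTensor_expPiI N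
  bijective_two_nsmul := bijective_two_nsmul_tensor_complex N

end TensorUnits

theorem stmt_3_general (N : Type*) [AddCommGroup N] [Module ℤ N]
    [Module.Free ℤ N]
    (τ : N →ₗ[ℤ] N) (hτ : ∀ x, τ (τ x) = x) :
    Nonempty
      (Hq (LinearMap.toAddMonoidHom
            (1 + TensorProduct.map τ conjAddHom :
              Module.End ℤ (TensorProduct ℤ N (Additive ℂˣ))))
          (LinearMap.toAddMonoidHom
            (1 - TensorProduct.map τ conjAddHom :
              Module.End ℤ (TensorProduct ℤ N (Additive ℂˣ))))
        ≃+ Hq (LinearMap.toAddMonoidHom (1 + τ : Module.End ℤ N))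
            (LinearMap.toAddMonoidHom (1 - τ : Module.End ℤ N))) ∧
    Nonempty
      (Hq (LinearMap.toAddMonoidHom
            (1 - TensorProduct.map τ conjAddHom :
              Module.End ℤ (TensorProduct ℤ N (Additive ℂˣ))))
          (LinearMap.toAddMonoidHom
            (1 + TensorProduct.map τ conjAddHom :
              Module.End ℤ (TensorProduct ℤ N (Additive ℂˣ))))
        ≃+ Hq (LinearMap.toAddMonoidHom (1 - τ : Module.End ℤ N))
            (LinearMap.toAddMonoidHom (1 + τ : Module.End ℤ N))) := by
  have h := isAcyclicTwistedExtension_tensor_units N τ hτ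
  -- `LinearMap.toAddMonoidHom (1 ± f)` is definitionally `AddMonoidHom.id _ ± f.toAddMonoidHom`.
  exact ⟨h.nonempty_addEquiv_hq_add_sub, h.nonempty_addEquiv_hq_sub_add⟩

/-- **Group cohomology of a real torus.** For a ℤ[τ]-lattice `(N, τ)`, let
`T = N ⊗_ℤ ℂˣ` (with `ℂˣ` written additively) and `σ = τ ⊗ conj`. Then
`ker(1+σ)/im(1−σ) ≅ ker(1+τ)/im(1−τ)` and `ker(1−σ)/im(1+σ) ≅ ker(1−τ)/im(1+τ)`,
i.e. `H^k(ℤ/2; N ⊗ ℂˣ) ≅ H^k(ℤ/2; N)` for every `k ≥ 1`. -/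
theorem stmt_3 (N : Type*) [AddCommGroup N] [Module ℤ N]
    [Module.Free ℤ N] [Module.Finite ℤ N]
    (τ : N →ₗ[ℤ] N) (hτ : ∀ x, τ (τ x) = x) :
    Nonempty
      (Hq (LinearMap.toAddMonoidHom
            (1 + TensorProduct.map τ conjAddHom :
              Module.End ℤ (TensorProduct ℤ N (Additive ℂˣ))))
          (LinearMap.toAddMonoidHom
            (1 - TensorProduct.map τ conjAddHom :
              Module.End ℤ (TensorProduct ℤ N (Additive ℂˣ))))
        ≃+ Hq (LinearMap.toAddMonoidHom (1 + τ : Module.End ℤ N))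
            (LinearMap.toAddMonoidHom (1 - τ : Module.End ℤ N))) ∧
    Nonempty
      (Hq (LinearMap.toAddMonoidHom
            (1 - TensorProduct.map τ conjAddHom :
              Module.End ℤ (TensorProduct ℤ N (Additive ℂˣ))))
          (LinearMap.toAddMonoidHom
            (1 + TensorProduct.map τ conjAddHom :
              Module.End ℤ (TensorProduct ℤ N (Additive ℂˣ))))
        ≃+ Hq (LinearMap.toAddMonoidHom (1 - τ : Module.End ℤ N))
            (LinearMap.toAddMonoidHom (1 + τ : Module.End ℤ N))) :=
  stmt_3_general N τ hτ
end

section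
/- Let p, q be natural numbers and μ : ℤ^q → ℤ^p a ℤ-linear map. Define τ : ℤ^p ⊕ ℤ^q → ℤ^p ⊕ ℤ^q by τ(x, t) = (x + μ(t), −t). Then τ is an involution, ker(1−τ) = ℤ^p ⊕ 0, and the winding number of the ℤ[τ]-lattice (ℤ^p ⊕ ℤ^q, τ), i.e. dim_{F₂} (ℤ^p ⊕ ℤ^q)/(ker(1−τ) + ker(1+τ)), equals the rank of the induced F₂-linear map μ ⊗ F₂ : F₂^q → F₂^p. -/
/-!
The `+1`-eigenvectors of `τ(x, t) = (x + μ t, -t)` are the `(x, 0)` and the `-1`-eigenvectors are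
the `(x, t)` with `2x + μ t = 0`; hence `(x, t)` lies in their sum iff `μ t ∈ 2ℤ^p`, by the splitting
`(x, t) = (x + y, 0) + (-y, t)` when `μ t = 2y`. So the winding group is the quotient by the kernel of
`(x, t) ↦ μ t mod 2`, whose image is the range of `μ ⊗ 𝔽₂` because reduction mod `2` is surjective.
-/

section Twist

variable {R M N : Type*} [Ring R] [AddCommGroup M] [Module R M] [AddCommGroup N] [Module R N]
  {μ : N →ₗ[R] M} {τ : (M × N) →ₗ[R] (M × N)}

theorem twist_apply_twist (hτ : ∀ x t, τ (x, t) = (x + μ t, -t)) (v : M × N) : τ (τ v) = v := by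
  obtain ⟨x, t⟩ := v
  simp [hτ]

theorem mem_ker_one_sub_twist_iff (hτ : ∀ x t, τ (x, t) = (x + μ t, -t)) {v : M × N} :
    v ∈ LinearMap.ker (1 - τ) ↔ μ v.2 = 0 ∧ v.2 + v.2 = 0 := by
  obtain ⟨x, t⟩ := v
  simp [hτ, Prod.ext_iff]

theorem mem_ker_one_add_twist_iff (hτ : ∀ x t, τ (x, t) = (x + μ t, -t)) {v : M × N} :
    v ∈ LinearMap.ker (1 + τ) ↔ v.1 + v.1 + μ v.2 = 0 := by
  obtain ⟨x, t⟩ := v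
  simp [hτ, Prod.ext_iff, add_assoc]

theorem ker_one_sub_twist [IsAddTorsionFree N] (hτ : ∀ x t, τ (x, t) = (x + μ t, -t)) :
    LinearMap.ker (1 - τ) = Submodule.prod ⊤ ⊥ := by
  ext ⟨x, t⟩
  rw [mem_ker_one_sub_twist_iff hτ]
  simp only [Submodule.mem_prod, Submodule.mem_top, Submodule.mem_bot, true_and]
  constructor
  · rintro ⟨-, htt⟩
    exact nsmul_right_injective two_ne_zero (by simpa [two_nsmul] using htt)
  · rintro rfl
    simp

theorem mem_sup_ker_twist_iff (hτ : ∀ x t, τ (x, t) = (x + μ t, -t)) {v : M × N} :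
    v ∈ LinearMap.ker (1 - τ) ⊔ LinearMap.ker (1 + τ) ↔ ∃ y, μ v.2 = 2 • y := by
  rw [Submodule.mem_sup]
  constructor
  · rintro ⟨a, ha, b, hb, rfl⟩
    rw [mem_ker_one_sub_twist_iff hτ] at ha
    rw [mem_ker_one_add_twist_iff hτ] at hb
    refine ⟨-b.1, ?_⟩
    rw [Prod.snd_add, map_add, ha.1, zero_add, two_nsmul, eq_neg_of_add_eq_zero_right hb,
      neg_add]
  · rintro ⟨y, hy⟩
    refine ⟨(v.1 + y, 0), ?_, (-y, v.2), ?_, by simp⟩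
    · simp [mem_ker_one_sub_twist_iff hτ]
    · simp [mem_ker_one_add_twist_iff hτ, hy, two_nsmul]

end Twist

theorem intCast_zmod_eq_zero_iff_exists_eq_nsmul {ι : Type*} (n : ℕ) (y : ι → ℤ) :
    (fun i => (y i : ZMod n)) = 0 ↔ ∃ z, y = n • z := by
  constructor
  · intro hy
    have hdvd i : (n : ℤ) ∣ y i := (ZMod.intCast_zmod_eq_zero_iff_dvd _ n).mp (congrFun hy i)
    exact ⟨fun i => y i / n, funext fun i => by simp [Int.mul_ediv_cancel' (hdvd i)]⟩
  · rintro ⟨z, rfl⟩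
    ext i
    simp

/-- **Winding number of a twisted product.** Let `μ : ℤ^q → ℤ^p` be ℤ-linear and let
`τ(x, t) = (x + μ(t), −t)` on `ℤ^p ⊕ ℤ^q`. Then `τ` is an involution,
`ker(1−τ) = ℤ^p ⊕ 0`, and the winding number
`dim_{F₂} (ℤ^p ⊕ ℤ^q)/(ker(1−τ)+ker(1+τ))` equals the rank of `μ ⊗ F₂ : F₂^q → F₂^p`. -/
theorem stmt_11 (p q : ℕ) (μ : (Fin q → ℤ) →ₗ[ℤ] (Fin p → ℤ))
    (τ : ((Fin p → ℤ) × (Fin q → ℤ)) →ₗ[ℤ] ((Fin p → ℤ) × (Fin q → ℤ)))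
    (hτ : ∀ (x : Fin p → ℤ) (t : Fin q → ℤ), τ (x, t) = (x + μ t, -t)) :
    (∀ v, τ (τ v) = v) ∧
    LinearMap.ker (1 - τ : Module.End ℤ ((Fin p → ℤ) × (Fin q → ℤ))) =
      Submodule.prod ⊤ ⊥ ∧
    (∀ μ₂ : (Fin q → ZMod 2) →ₗ[ZMod 2] (Fin p → ZMod 2),
      (∀ t : Fin q → ℤ, μ₂ (fun i => ((t i : ℤ) : ZMod 2)) = fun j => ((μ t j : ℤ) : ZMod 2)) →
      Nat.card (((Fin p → ℤ) × (Fin q → ℤ)) ⧸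
        (LinearMap.ker (1 - τ : Module.End ℤ ((Fin p → ℤ) × (Fin q → ℤ))) ⊔
          LinearMap.ker (1 + τ : Module.End ℤ ((Fin p → ℤ) × (Fin q → ℤ))))) =
        2 ^ Module.finrank (ZMod 2) (LinearMap.range μ₂)) := by
  refine ⟨twist_apply_twist hτ, ker_one_sub_twist hτ, fun μ₂ hμ₂ => ?_⟩
  set reduce := (Int.castAddHom (ZMod 2)).toIntLinearMap.compLeft (Fin q)
  set f := μ₂.restrictScalars ℤ ∘ₗ reduce ∘ₗ LinearMap.snd ℤ (Fin p → ℤ) (Fin q → ℤ)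
  have hker : LinearMap.ker (1 - τ) ⊔ LinearMap.ker (1 + τ) = LinearMap.ker f := by
    ext v
    rw [mem_sup_ker_twist_iff hτ, LinearMap.mem_ker, show f v = _ from hμ₂ v.2,
      intCast_zmod_eq_zero_iff_exists_eq_nsmul]
  have hrange : LinearMap.range f = (LinearMap.range μ₂).restrictScalars ℤ := by
    have hsurj : LinearMap.range (reduce ∘ₗ LinearMap.snd ℤ (Fin p → ℤ) (Fin q → ℤ)) = ⊤ :=
      LinearMap.range_eq_top.mpr <|
        (ZMod.intCast_surjective.comp_left).comp LinearMap.snd_surjective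
    rw [LinearMap.range_comp_of_range_eq_top _ hsurj, LinearMap.range_restrictScalars]
  calc Nat.card (_ ⧸ LinearMap.ker (1 - τ) ⊔ LinearMap.ker (1 + τ))
      = Nat.card (LinearMap.range f) := by rw [hker]; exact Nat.card_congr f.quotKerEquivRange.toEquiv
    _ = Nat.card (LinearMap.range μ₂) := by rw [hrange]; rfl
    _ = 2 ^ Module.finrank (ZMod 2) (LinearMap.range μ₂) := by
      rw [Nat.card_eq_fintype_card, Module.card_eq_pow_finrank (K := ZMod 2), ZMod.card]
end

section
/- Let A be an m×m integer matrix and A' an n×n integer matrix with A² = I and A'² = I, and let B be an n×m integer matrix satisfying B·A = A'·B. Let f : (ℂˣ)^m → (ℂˣ)^n be the group homomorphism f(z)_j = ∏_{i=1}^m z_i^{B_{ji}}, and assume f is surjective. Then the image under f of the fixed subgroup {z ∈ (ℂˣ)^m : σ_A(z) = z} is an open subgroup of finite index (hence also closed) of the fixed subgroup {w ∈ (ℂˣ)^n : σ_{A'}(w) = w}. -/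
theorem Finset.zpow_sum {G ι : Type*} [CommGroup G] (a : G) (s : Finset ι) (f : ι → ℤ) :
    a ^ (∑ i ∈ s, f i) = ∏ i ∈ s, a ^ f i := by
  classical
  induction s using Finset.induction with
  | empty => simp
  | insert _ _ h ih => simp [Finset.sum_insert h, Finset.prod_insert h, zpow_add, ih]

section fixedSubgroup

variable {G H : Type*} [Group H] {τ : H →* H}

theorem mem_fixedSubgroup_iff {w : H} : w ∈ fixedSubgroup τ ↔ τ w = w := Iff.rfl

theorem map_fixedSubgroup_le [Group G] {σ : G →* G} {f : G →* H} (hf : f.comp σ = τ.comp f) :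
    (fixedSubgroup σ).map f ≤ fixedSubgroup τ := by
  rintro _ ⟨z, hz, rfl⟩
  rw [mem_fixedSubgroup_iff, ← MonoidHom.comp_apply, ← hf, MonoidHom.comp_apply,
    mem_fixedSubgroup_iff.1 hz]

theorem sq_mem_map_fixedSubgroup [CommGroup G] {σ : G →* G} {f : G →* H}
    (hσ : σ.comp σ = .id G) (hf : f.comp σ = τ.comp f) (hsurj : Function.Surjective f)
    {w : H} (hw : w ∈ fixedSubgroup τ) : w ^ 2 ∈ (fixedSubgroup σ).map f := by
  obtain ⟨z, rfl⟩ := hsurj w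
  refine Subgroup.mem_map.2 ⟨z * σ z, ?_, ?_⟩
  · rw [mem_fixedSubgroup_iff, map_mul, ← MonoidHom.comp_apply σ σ, hσ, MonoidHom.id_apply,
      mul_comm]
  · rw [map_mul, ← MonoidHom.comp_apply, hf, MonoidHom.comp_apply, mem_fixedSubgroup_iff.1 hw,
      sq]

end fixedSubgroup

section matZPow

variable {m n p : ℕ}

theorem matZPow_apply (B : Matrix (Fin n) (Fin m) ℤ) (z : Fin m → ℂˣ) (j : Fin n) :
    matZPow B z j = ∏ i, z i ^ B j i := rfl

theorem matZPow_comp_matZPow (B₁ : Matrix (Fin p) (Fin n) ℤ) (B₂ : Matrix (Fin n) (Fin m) ℤ) :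
    (matZPow B₁).comp (matZPow B₂) = matZPow (B₁ * B₂) := by
  refine MonoidHom.ext fun z => funext fun j => ?_
  simp only [MonoidHom.comp_apply, matZPow_apply, Matrix.mul_apply, Finset.zpow_sum,
    ← Finset.prod_zpow, ← zpow_mul, mul_comm (B₁ j _)]
  exact Finset.prod_comm

theorem matZPow_one : matZPow (1 : Matrix (Fin n) (Fin n) ℤ) = .id _ := by
  refine MonoidHom.ext fun z => funext fun j => ?_
  simp [matZPow_apply, Matrix.one_apply]

theorem matZPow_comp_compLeft (B : Matrix (Fin n) (Fin m) ℤ) (ρ : ℂˣ →* ℂˣ) :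
    (matZPow B).comp (ρ.compLeft (Fin m)) = (ρ.compLeft (Fin n)).comp (matZPow B) := by
  refine MonoidHom.ext fun z => funext fun j => ?_
  simp [matZPow_apply, MonoidHom.compLeft]

end matZPow

section sigmaMat

variable {m n : ℕ}

abbrev conjUnits : ℂˣ →* ℂˣ := Units.map (starRingEnd ℂ).toMonoidHom

theorem sigmaMat_eq (A : Matrix (Fin n) (Fin n) ℤ) :
    sigmaMat A = (matZPow A).comp (conjUnits.compLeft (Fin n)) := rfl

theorem compLeft_conjUnits_comp_self :
    (conjUnits.compLeft (Fin n)).comp (conjUnits.compLeft (Fin n)) = .id _ := by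
  refine MonoidHom.ext fun z => funext fun i => Units.ext ?_
  simp [MonoidHom.compLeft]

theorem sigmaMat_comp_sigmaMat {A : Matrix (Fin n) (Fin n) ℤ} (hA : A * A = 1) :
    (sigmaMat A).comp (sigmaMat A) = .id _ := by
  rw [sigmaMat_eq, MonoidHom.comp_assoc, ← MonoidHom.comp_assoc _ (matZPow A),
    ← matZPow_comp_compLeft, MonoidHom.comp_assoc, compLeft_conjUnits_comp_self,
    MonoidHom.comp_id, matZPow_comp_matZPow, hA, matZPow_one]

theorem matZPow_comp_sigmaMat {A : Matrix (Fin m) (Fin m) ℤ} {A' : Matrix (Fin n) (Fin n) ℤ}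
    {B : Matrix (Fin n) (Fin m) ℤ} (hBA : B * A = A' * B) :
    (matZPow B).comp (sigmaMat A) = (sigmaMat A').comp (matZPow B) := by
  rw [sigmaMat_eq, sigmaMat_eq, ← MonoidHom.comp_assoc, matZPow_comp_matZPow, hBA,
    ← matZPow_comp_matZPow, MonoidHom.comp_assoc, MonoidHom.comp_assoc, matZPow_comp_compLeft]

theorem sigmaMat_comp_compLeft (A : Matrix (Fin n) (Fin n) ℤ) {ρ : ℂˣ →* ℂˣ}
    (hρ : ρ.comp conjUnits = conjUnits.comp ρ) :
    (sigmaMat A).comp (ρ.compLeft (Fin n)) = (ρ.compLeft (Fin n)).comp (sigmaMat A) := by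
  have : (conjUnits.compLeft (Fin n)).comp (ρ.compLeft (Fin n)) =
      (ρ.compLeft (Fin n)).comp (conjUnits.compLeft (Fin n)) := by
    refine MonoidHom.ext fun z => funext fun i => ?_
    exact (DFunLike.congr_fun hρ (z i)).symm
  rw [sigmaMat_eq, MonoidHom.comp_assoc, this, ← MonoidHom.comp_assoc, matZPow_comp_compLeft,
    MonoidHom.comp_assoc]

theorem compLeft_mem_fixedSubgroup {A : Matrix (Fin n) (Fin n) ℤ} {ρ : ℂˣ →* ℂˣ}
    (hρ : ρ.comp conjUnits = conjUnits.comp ρ) {w : Fin n → ℂˣ}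
    (hw : w ∈ fixedSubgroup (sigmaMat A)) : ρ.compLeft (Fin n) w ∈ fixedSubgroup (sigmaMat A) := by
  rw [mem_fixedSubgroup_iff, ← MonoidHom.comp_apply, sigmaMat_comp_compLeft A hρ,
    MonoidHom.comp_apply, mem_fixedSubgroup_iff.1 hw]

theorem sigmaMat_apply_val (A : Matrix (Fin n) (Fin n) ℤ) (w : Fin n → ℂˣ) (j : Fin n) :
    (sigmaMat A w j : ℂ) = ∏ i, starRingEnd ℂ (w i) ^ A j i := by
  simp [sigmaMat_eq, matZPow_apply, MonoidHom.compLeft]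

end sigmaMat

theorem isClosed_fixedSubgroup {G : Type*} [Group G] [TopologicalSpace G] [T2Space G]
    {σ : G →* G} (hσ : Continuous σ) : IsClosed (fixedSubgroup σ : Set G) :=
  isClosed_eq hσ continuous_id

theorem Subgroup.index_ne_zero_of_isOpen_of_isCompact {G : Type*} [Group G] [TopologicalSpace G]
    [ContinuousMul G] {H : Subgroup G} (hH : IsOpen (H : Set G)) {C : Set G} (hC : IsCompact C)
    (hCH : ∀ g, ∃ c ∈ C, ∃ h ∈ H, g = c * h) : H.index ≠ 0 := by
  have := QuotientGroup.discreteTopology hH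
  have himage : ((↑) : G → G ⧸ H) '' C = Set.univ := by
    refine Set.eq_univ_of_forall fun q => ?_
    obtain ⟨g, rfl⟩ := QuotientGroup.mk_surjective q
    obtain ⟨c, hc, h, hh, rfl⟩ := hCH g
    exact ⟨c, hc, (QuotientGroup.eq.2 (by simpa using hh)).symm⟩
  have : Finite (G ⧸ H) := by
    rw [← Set.finite_univ_iff, ← himage]
    exact (hC.image continuous_quotient_mk').finite_of_discrete
  exact Subgroup.index_ne_zero_of_finite

theorem isCompact_norm_eq_one {ι : Type*} :
    IsCompact {w : ι → ℂˣ | ∀ i, ‖(w i : ℂ)‖ = 1} := by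
  have hcircle : IsCompact {z : ℂˣ | ‖(z : ℂ)‖ = 1} := by
    rw [Units.isEmbedding_val₀.isCompact_iff]
    convert isCompact_sphere (0 : ℂ) 1
    ext z
    refine ⟨fun ⟨u, hu, hz⟩ => by simpa [← hz] using hu, fun h => ?_⟩
    exact ⟨Units.mk0 z (norm_ne_zero_iff.1 ((mem_sphere_zero_iff_norm.1 h).symm ▸ one_ne_zero)),
      by simpa using h, rfl⟩
  simpa [Set.pi] using isCompact_univ_pi fun _ : ι => hcircle

theorem continuous_matZPow {m n : ℕ} (B : Matrix (Fin n) (Fin m) ℤ) : Continuous (matZPow B) :=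
  continuous_pi fun j => by simp only [matZPow_apply]; fun_prop

theorem continuous_sigmaMat {n : ℕ} (A : Matrix (Fin n) (Fin n) ℤ) : Continuous (sigmaMat A) :=
  (continuous_matZPow A).comp <| continuous_pi fun i =>
    (Complex.continuous_conj.units_map _).comp (continuous_apply i)

open Complex in
theorem Complex.eq_zero_of_exp_eq_one_of_norm_lt {x : ℂ} (h : exp x = 1)
    (hx : ‖x‖ < 2 * Real.pi) : x = 0 := by
  obtain ⟨k, rfl⟩ := exp_eq_one_iff.1 h
  rcases eq_or_ne k 0 with rfl | hk
  · simp
  have hk1 : (1 : ℝ) ≤ |(k : ℝ)| := by exact_mod_cast Int.one_le_abs hk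
  have : ‖(k : ℂ) * (2 * Real.pi * I)‖ = |(k : ℝ)| * (2 * Real.pi) := by
    simp [abs_of_pos Real.pi_pos]
  nlinarith [Real.pi_pos]

section sqrt

open Complex ComplexConjugate

variable {n : ℕ}

noncomputable abbrev expUnit (z : ℂ) : ℂˣ := Units.mk0 (exp z) (exp_ne_zero z)

theorem sigmaMat_expUnit_val (A : Matrix (Fin n) (Fin n) ℤ) (l : Fin n → ℂ) (j : Fin n) :
    (sigmaMat A (fun i => expUnit (l i)) j : ℂ) = exp (∑ i, (A j i : ℂ) * conj (l i)) := by
  simp only [sigmaMat_apply_val, Units.val_mk0, ← exp_conj, ← exp_int_mul, exp_sum]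

theorem eventually_exists_sq_eq (A : Matrix (Fin n) (Fin n) ℤ) :
    ∀ᶠ w in nhds (1 : Fin n → ℂˣ), w ∈ fixedSubgroup (sigmaMat A) →
      ∃ v ∈ fixedSubgroup (sigmaMat A), v ^ 2 = w := by
  set L : (Fin n → ℂˣ) → Fin n → ℂ := fun w i => log (w i)
  set D : (Fin n → ℂˣ) → Fin n → ℂ := fun w j => ∑ i, (A j i : ℂ) * conj (L w i) - L w j
  have hL : ∀ i, ContinuousAt (fun w => L w i) 1 := fun i =>
    (continuousAt_clog (by simp)).comp (Units.continuous_val.comp (continuous_apply i)).continuousAt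
  have hD : ∀ j, ∀ᶠ w in nhds 1, ‖D w j‖ < 2 * Real.pi := fun j => by
    have hcont : ContinuousAt (fun w => D w j) 1 := by
      simp only [D]
      fun_prop
    refine hcont.norm.eventually_lt continuousAt_const ?_
    simpa [D, L] using Real.pi_pos
  filter_upwards [Filter.eventually_all.2 hD] with w hD hw
  have hexp : ∀ i, exp (L w i) = w i := fun i => exp_log (Units.ne_zero _)
  have hw_exp : w = fun i => expUnit (L w i) := funext fun i => Units.ext (hexp i).symm
  have hL_fixed : ∀ j, ∑ i, (A j i : ℂ) * conj (L w i) = L w j := fun j => by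
    refine sub_eq_zero.1 (eq_zero_of_exp_eq_one_of_norm_lt ?_ (hD j))
    have := congrArg (fun w => (w j : ℂ)) (mem_fixedSubgroup_iff.1 hw)
    rw [hw_exp] at this
    simp only [sigmaMat_expUnit_val, Units.val_mk0] at this
    rw [exp_sub, this, div_self (exp_ne_zero _)]
  refine ⟨fun i => expUnit (L w i / 2), ?_, ?_⟩
  · refine funext fun j => Units.ext ?_
    simp only [sigmaMat_expUnit_val, map_div₀, map_ofNat, Units.val_mk0, mul_div_assoc',
      ← Finset.sum_div, hL_fixed]
  · refine funext fun i => Units.ext ?_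
    simp [← exp_nat_mul, mul_div_cancel₀ _ (two_ne_zero' ℂ), hexp]

end sqrt

section polar

variable {n : ℕ}

noncomputable def sqrtNormUnits : ℂˣ →* ℂˣ where
  toFun z := Units.mk0 (Real.sqrt ‖(z : ℂ)‖ : ℂ) (by simp)
  map_one' := by ext; simp
  map_mul' z w := by ext; simp [Real.sqrt_mul (norm_nonneg _)]

theorem sqrtNormUnits_comp_conjUnits :
    sqrtNormUnits.comp conjUnits = conjUnits.comp sqrtNormUnits := by
  ext z
  simp [sqrtNormUnits]

theorem norm_sqrtNormUnits_sq (z : ℂˣ) : ‖((sqrtNormUnits z ^ 2 : ℂˣ) : ℂ)‖ = ‖(z : ℂ)‖ := by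
  simp [sqrtNormUnits, Real.sq_sqrt (norm_nonneg _)]

theorem exists_mul_sq_of_mem_fixedSubgroup {A : Matrix (Fin n) (Fin n) ℤ} {w : Fin n → ℂˣ}
    (hw : w ∈ fixedSubgroup (sigmaMat A)) :
    ∃ u ∈ fixedSubgroup (sigmaMat A), (∀ i, ‖(u i : ℂ)‖ = 1) ∧
      ∃ r ∈ fixedSubgroup (sigmaMat A), w = u * r ^ 2 := by
  set r := sqrtNormUnits.compLeft (Fin n) w
  have hr : r ∈ fixedSubgroup (sigmaMat A) :=
    compLeft_mem_fixedSubgroup sqrtNormUnits_comp_conjUnits hw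
  refine ⟨w * (r ^ 2)⁻¹, mul_mem hw (inv_mem (pow_mem hr 2)), fun i => ?_, r, hr, by group⟩
  have h := norm_sqrtNormUnits_sq (w i)
  have hw0 : ‖(w i : ℂ)‖ ≠ 0 := norm_ne_zero_iff.2 (w i).ne_zero
  simp only [Pi.mul_apply, Pi.inv_apply, Pi.pow_apply, Units.val_mul, norm_mul,
    Units.val_inv_eq_inv_val, norm_inv]
  rw [show r i ^ 2 = sqrtNormUnits (w i) ^ 2 from rfl, h, mul_inv_cancel₀ hw0]

end polar

section squares

variable {n : ℕ} (A : Matrix (Fin n) (Fin n) ℤ)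

theorem isOpen_range_powMonoidHom_two :
    IsOpen ((powMonoidHom 2 : fixedSubgroup (sigmaMat A) →* _).range :
      Set (fixedSubgroup (sigmaMat A))) := by
  refine Subgroup.isOpen_of_mem_nhds _ (g := 1) ?_
  filter_upwards [(continuous_subtype_val.tendsto 1).eventually (eventually_exists_sq_eq A)]
    with k hk
  obtain ⟨v, hv, hvk⟩ := hk k.2
  exact ⟨⟨v, hv⟩, Subtype.ext hvk⟩

theorem index_range_powMonoidHom_two_ne_zero :
    (powMonoidHom 2 : fixedSubgroup (sigmaMat A) →* _).range.index ≠ 0 := by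
  have hC : IsCompact {k : fixedSubgroup (sigmaMat A) | ∀ i, ‖((k : Fin n → ℂˣ) i : ℂ)‖ = 1} :=
    (isClosed_fixedSubgroup (continuous_sigmaMat A)).isClosedEmbedding_subtypeVal
      |>.isCompact_preimage isCompact_norm_eq_one
  refine Subgroup.index_ne_zero_of_isOpen_of_isCompact (isOpen_range_powMonoidHom_two A) hC
    fun k => ?_
  obtain ⟨u, hu, hu1, r, hr, hk⟩ := exists_mul_sq_of_mem_fixedSubgroup k.2
  exact ⟨⟨u, hu⟩, hu1, ⟨r, hr⟩ ^ 2, ⟨⟨r, hr⟩, rfl⟩, Subtype.ext hk⟩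

end squares

theorem stmt_13_general (m n : ℕ) (A : Matrix (Fin m) (Fin m) ℤ) (A' : Matrix (Fin n) (Fin n) ℤ)
    (B : Matrix (Fin n) (Fin m) ℤ) (hA : A * A = 1)
    (hBA : B * A = A' * B)
    (hsurj : Function.Surjective (matZPow B)) :
    Subgroup.map (matZPow B) (fixedSubgroup (sigmaMat A)) ≤ fixedSubgroup (sigmaMat A') ∧
    IsOpen (((Subgroup.map (matZPow B) (fixedSubgroup (sigmaMat A))).subgroupOf
      (fixedSubgroup (sigmaMat A')) : Subgroup (fixedSubgroup (sigmaMat A'))) :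
        Set (fixedSubgroup (sigmaMat A'))) ∧
    IsClosed (((Subgroup.map (matZPow B) (fixedSubgroup (sigmaMat A))).subgroupOf
      (fixedSubgroup (sigmaMat A')) : Subgroup (fixedSubgroup (sigmaMat A'))) :
        Set (fixedSubgroup (sigmaMat A'))) ∧
    ((Subgroup.map (matZPow B) (fixedSubgroup (sigmaMat A))).subgroupOf
      (fixedSubgroup (sigmaMat A'))).index ≠ 0 := by
  set K := fixedSubgroup (sigmaMat A')
  set S := (fixedSubgroup (sigmaMat A)).map (matZPow B)
  have hsq : (powMonoidHom 2 : K →* K).range ≤ S.subgroupOf K := by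
    rintro _ ⟨k, rfl⟩
    exact sq_mem_map_fixedSubgroup (sigmaMat_comp_sigmaMat hA) (matZPow_comp_sigmaMat hBA) hsurj
      k.2
  have hopen : IsOpen (S.subgroupOf K : Set K) :=
    Subgroup.isOpen_mono hsq (isOpen_range_powMonoidHom_two A')
  exact ⟨map_fixedSubgroup_le (matZPow_comp_sigmaMat hBA), hopen,
    Subgroup.isClosed_of_isOpen _ hopen,
    ne_zero_of_dvd_ne_zero (index_range_powMonoidHom_two_ne_zero A')
      (Subgroup.index_dvd_of_le hsq)⟩

/-- **Images of real points under surjections of real tori.** Let `A` (`m×m`) and `A'`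
(`n×n`) be integer matrices with `A² = I`, `A'² = I`, and `B` (`n×m`) with `BA = A'B`.
If the monoid homomorphism `f : (ℂˣ)^m → (ℂˣ)^n`, `f(z)_j = ∏ i, z i ^ B j i`, is
surjective, then the image under `f` of the fixed subgroup of `σ_A` is an open (hence
also closed) subgroup of finite index of the fixed subgroup of `σ_{A'}`. -/
theorem stmt_13 (m n : ℕ) (A : Matrix (Fin m) (Fin m) ℤ) (A' : Matrix (Fin n) (Fin n) ℤ)
    (B : Matrix (Fin n) (Fin m) ℤ) (hA : A * A = 1) (hA' : A' * A' = 1)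
    (hBA : B * A = A' * B)
    (hsurj : Function.Surjective (matZPow B)) :
    Subgroup.map (matZPow B) (fixedSubgroup (sigmaMat A)) ≤ fixedSubgroup (sigmaMat A') ∧
    IsOpen (((Subgroup.map (matZPow B) (fixedSubgroup (sigmaMat A))).subgroupOf
      (fixedSubgroup (sigmaMat A')) : Subgroup (fixedSubgroup (sigmaMat A'))) :
        Set (fixedSubgroup (sigmaMat A'))) ∧
    IsClosed (((Subgroup.map (matZPow B) (fixedSubgroup (sigmaMat A))).subgroupOf
      (fixedSubgroup (sigmaMat A')) : Subgroup (fixedSubgroup (sigmaMat A'))) :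
        Set (fixedSubgroup (sigmaMat A'))) ∧
    ((Subgroup.map (matZPow B) (fixedSubgroup (sigmaMat A))).subgroupOf
      (fixedSubgroup (sigmaMat A'))).index ≠ 0 :=
  stmt_13_general m n A A' B hA hBA hsurj
end
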